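/- arXiv:1910.13005 — 6 statements merged into one kernel-verified Lean document; each statement's English description precedes it below -/
import Mathlib

section
/- Let G be a second-countable ample Hausdorff groupoid and let (Σ, i, q) be a discrete twist by T ≤ R^× over G. Then Σ is topologically trivial, i.e. it admits a continuous global section P : G → Σ with q ∘ P = id_G and P(G^(0)) ⊆ Σ^(0). -/
/-!
Common definitions: topological groupoids, bisections, étale/ample groupoids,
continuous `Rˣ`-valued 2-cocycles, and twisted Steinberg algebras.

A groupoid is modelled as a type `G` together with a composability predicate
`comp`, a (partial, junk-valued off composable pairs) multiplication `mul`,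
and an inversion `inv`.  The range and source maps are `r γ = γ γ⁻¹` and
`s γ = γ⁻¹ γ`, and the unit space is the set of fixed points of `r`.
-/

namespace TwistedSteinberg

structure GroupoidStruct (G : Type*) where
  comp : G → G → Prop
  mul : G → G → G
  inv : G → G

namespace GroupoidStruct

variable {G : Type*}

/-- The range map `r γ = γ γ⁻¹`. -/
def r (T : GroupoidStruct G) (γ : G) : G := T.mul γ (T.inv γ)

/-- The source map `s γ = γ⁻¹ γ`. -/
def s (T : GroupoidStruct G) (γ : G) : G := T.mul (T.inv γ) γ

/-- The unit space `G⁰`. -/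
def unitSpace (T : GroupoidStruct G) : Set G := {x | T.r x = x}

/-- The axioms making `(comp, mul, inv)` a groupoid. -/
structure IsGroupoid (T : GroupoidStruct G) : Prop where
  comp_iff : ∀ a b, T.comp a b ↔ T.s a = T.r b
  assoc : ∀ a b c, T.comp a b → T.comp b c →
    T.mul (T.mul a b) c = T.mul a (T.mul b c)
  inv_inv : ∀ a, T.inv (T.inv a) = a
  r_mul : ∀ a b, T.comp a b → T.r (T.mul a b) = T.r a
  s_mul : ∀ a b, T.comp a b → T.s (T.mul a b) = T.s b
  r_inv : ∀ a, T.r (T.inv a) = T.s a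
  s_inv : ∀ a, T.s (T.inv a) = T.r a
  r_mul_self : ∀ a, T.mul (T.r a) a = a
  mul_s_self : ∀ a, T.mul a (T.s a) = a
  r_unit : ∀ a, T.r a ∈ T.unitSpace
  s_unit : ∀ a, T.s a ∈ T.unitSpace

/-- A topological groupoid: inversion is continuous and multiplication is
continuous on the set of composable pairs. -/
structure IsTopGroupoid [TopologicalSpace G] (T : GroupoidStruct G)
    extends IsGroupoid T : Prop where
  continuous_inv : Continuous T.inv
  continuousOn_mul : ContinuousOn (fun p : G × G => T.mul p.1 p.2)
    {p : G × G | T.comp p.1 p.2}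

/-- `B` is a bisection if it is contained in an open set `U` on which both `r`
and `s` restrict to homeomorphisms onto open subsets. -/
def IsBisection [TopologicalSpace G] (T : GroupoidStruct G) (B : Set G) : Prop :=
  ∃ U : Set G, B ⊆ U ∧ IsOpen U ∧ Set.InjOn T.r U ∧ Set.InjOn T.s U ∧
    ∀ V : Set G, V ⊆ U → IsOpen V → IsOpen (T.r '' V) ∧ IsOpen (T.s '' V)

/-- A groupoid is étale if its range map is a local homeomorphism. -/
def IsEtale [TopologicalSpace G] (T : GroupoidStruct G) : Prop :=
  IsLocalHomeomorph T.r

/-- A groupoid is ample if it has a basis of compact open bisections. -/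
def IsAmple [TopologicalSpace G] (T : GroupoidStruct G) : Prop :=
  TopologicalSpace.IsTopologicalBasis
    {B : Set G | IsCompact B ∧ IsOpen B ∧ T.IsBisection B}

/-- The product `BD` of two subsets of a groupoid. -/
def setMul (T : GroupoidStruct G) (B D : Set G) : Set G :=
  {x | ∃ a ∈ B, ∃ b ∈ D, T.comp a b ∧ T.mul a b = x}

end GroupoidStruct

open GroupoidStruct

section Cocycle

variable {G R : Type*} [TopologicalSpace G] [CommRing R] [TopologicalSpace R]

/-- A continuous normalised `Rˣ`-valued 2-cocycle on the groupoid `T`. -/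
structure IsCocycle (T : GroupoidStruct G) (σ : G → G → Rˣ) : Prop where
  continuousOn : ContinuousOn (fun p : G × G => ((σ p.1 p.2 : Rˣ) : R))
    {p : G × G | T.comp p.1 p.2}
  cocycle : ∀ a b c, T.comp a b → T.comp b c →
    σ a b * σ (T.mul a b) c = σ a (T.mul b c) * σ b c
  norm_left : ∀ γ : G, σ (T.r γ) γ = 1
  norm_right : ∀ γ : G, σ γ (T.s γ) = 1

/-- The underlying `R`-module of the (twisted) Steinberg algebra: locally
constant compactly supported functions `G → R`. -/
def steinbergCarrier (G R : Type*) [TopologicalSpace G] [Zero R] : Set (G → R) :=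
  {f | IsLocallyConstant f ∧ IsCompact (Function.support f)}

/-- The twisted convolution product
`(f *σ g)(γ) = ∑_{αβ = γ} σ(α,β) f(α) g(β)`. -/
noncomputable def conv (T : GroupoidStruct G) (σ : G → G → Rˣ)
    (f g : G → R) (γ : G) : R :=
  ∑ᶠ (p : G × G) (_ : T.comp p.1 p.2 ∧ T.mul p.1 p.2 = γ),
    ((σ p.1 p.2 : Rˣ) : R) * f p.1 * g p.2

/-- A `T`-inverse involution on `R`: a ring involution restricting to
inversion on the subgroup `Tsub ≤ Rˣ`. -/
def IsTInverseInvolution (Tsub : Subgroup Rˣ) (c : R → R) : Prop :=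
  c 1 = 1 ∧ (∀ x y, c (x + y) = c x + c y) ∧ (∀ x y, c (x * y) = c x * c y) ∧
    (∀ x, c (c x) = x) ∧ ∀ z : Rˣ, z ∈ Tsub → c ((z : Rˣ) : R) = ((z⁻¹ : Rˣ) : R)

/-- The twisted involution `f*(γ) = σ(γ,γ⁻¹)⁻¹ ⬝ c (f (γ⁻¹))`. -/
noncomputable def convStar (T : GroupoidStruct G) (σ : G → G → Rˣ) (c : R → R)
    (f : G → R) (γ : G) : R :=
  (((σ γ (T.inv γ))⁻¹ : Rˣ) : R) * c (f (T.inv γ))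

end Cocycle
section Twist

/-!
Discrete twists `G⁰ × T → Σ → G` over a Hausdorff étale groupoid `G`,
where `T = Tsub` is a subgroup of the units `Rˣ` of a discrete commutative
unital ring `R`.  The inclusion is modelled as a map `i : G → Tsub → Σ`
(only its values `i x z` for `x ∈ G⁰` are relevant).
-/

variable {G S R : Type*} [TopologicalSpace G] [TopologicalSpace S]
  [CommRing R] [TopologicalSpace R]

/-- A discrete twist `(Σ, i, q)` by `Tsub ≤ Rˣ` over `G`. -/
structure IsDiscreteTwist (TG : GroupoidStruct G) (TS : GroupoidStruct S)
    (Tsub : Subgroup Rˣ) (i : G → Tsub → S) (q : S → G) : Prop where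
  topS : TS.IsTopGroupoid
  t2S : T2Space S
  locallyCompactS : LocallyCompactSpace S
  unit_eq : TS.unitSpace = (fun x => i x 1) '' TG.unitSpace
  i_continuousOn : ContinuousOn (fun p : G × Tsub => i p.1 p.2)
    (TG.unitSpace ×ˢ (Set.univ : Set Tsub))
  i_injective : ∀ x ∈ TG.unitSpace, ∀ x' ∈ TG.unitSpace, ∀ z z' : Tsub,
    i x z = i x' z' → x = x' ∧ z = z'
  i_comp : ∀ x ∈ TG.unitSpace, ∀ z w : Tsub, TS.comp (i x z) (i x w)
  i_mul : ∀ x ∈ TG.unitSpace, ∀ z w : Tsub, TS.mul (i x z) (i x w) = i x (z * w)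
  i_inv : ∀ x ∈ TG.unitSpace, ∀ z : Tsub, TS.inv (i x z) = i x z⁻¹
  q_continuous : Continuous q
  q_surjective : Function.Surjective q
  q_quotient : ∀ V : Set G, IsOpen V ↔ IsOpen (q ⁻¹' V)
  q_comp : ∀ ε δ, TS.comp ε δ → TG.comp (q ε) (q δ)
  q_mul : ∀ ε δ, TS.comp ε δ → q (TS.mul ε δ) = TG.mul (q ε) (q δ)
  q_inv : ∀ ε, q (TS.inv ε) = TG.inv (q ε)
  q_i : ∀ x ∈ TG.unitSpace, ∀ z : Tsub, q (i x z) = x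
  i_q_unit : ∀ ε ∈ TS.unitSpace, i (q ε) 1 = ε
  q_unit_mem : ∀ ε ∈ TS.unitSpace, q ε ∈ TG.unitSpace
  exact_fibre : ∀ x ∈ TG.unitSpace, ∀ ε, q ε = x ↔ ∃ z : Tsub, ε = i x z
  central_comp_left : ∀ (ε : S) (z : Tsub), TS.comp (i (TG.r (q ε)) z) ε
  central_comp_right : ∀ (ε : S) (z : Tsub), TS.comp ε (i (TG.s (q ε)) z)
  central : ∀ (ε : S) (z : Tsub),
    TS.mul (i (TG.r (q ε)) z) ε = TS.mul ε (i (TG.s (q ε)) z)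
  locally_trivial : ∀ α : G, ∃ B : Set G, α ∈ B ∧ IsOpen B ∧ TG.IsBisection B ∧
    ∃ P : G → S, ContinuousOn P B ∧ (∀ β ∈ B, q (P β) = β) ∧
      Set.BijOn (fun p : G × Tsub => TS.mul (i (TG.r p.1) p.2) (P p.1))
        (B ×ˢ (Set.univ : Set Tsub)) (q ⁻¹' B) ∧
      ContinuousOn (fun p : G × Tsub => TS.mul (i (TG.r p.1) p.2) (P p.1))
        (B ×ˢ (Set.univ : Set Tsub)) ∧
      ∀ V ⊆ B ×ˢ (Set.univ : Set Tsub), IsOpen V →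
        IsOpen ((fun p : G × Tsub => TS.mul (i (TG.r p.1) p.2) (P p.1)) '' V)

/-- The action `z ⬝ ε = i(r(ε), z) ε` of `Tsub` on the twist `Σ`. -/
def twistAct (TG : GroupoidStruct G) (TS : GroupoidStruct S)
    {Tsub : Subgroup Rˣ} (i : G → Tsub → S) (q : S → G) (z : Tsub) (ε : S) : S :=
  TS.mul (i (TG.r (q ε)) z) ε

/-- A continuous global section `P : G → Σ` of the twist. -/
def IsGlobalSection (TG : GroupoidStruct G) (TS : GroupoidStruct S)
    (q : S → G) (P : G → S) : Prop :=
  Continuous P ∧ (∀ γ, q (P γ) = γ) ∧ ∀ x ∈ TG.unitSpace, P x ∈ TS.unitSpace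

/-- The 2-cocycle `σ` is induced by the section `P`, i.e.
`P(α) P(β) P(αβ)⁻¹ = i(r(α), σ(α,β))` for composable `(α,β)`. -/
def InducesCocycle (TG : GroupoidStruct G) (TS : GroupoidStruct S)
    {Tsub : Subgroup Rˣ} (i : G → Tsub → S) (P : G → S) (σ : G → G → Tsub) : Prop :=
  ∀ α β, TG.comp α β →
    TS.mul (TS.mul (P α) (P β)) (TS.inv (P (TG.mul α β))) = i (TG.r α) (σ α β)

/-- A continuous normalised 2-cocycle with values in the subgroup `Tsub ≤ Rˣ`. -/
structure IsCocycleSub (TG : GroupoidStruct G) (Tsub : Subgroup Rˣ)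
    (σ : G → G → Tsub) : Prop where
  continuousOn : ContinuousOn (fun p : G × G => (((σ p.1 p.2 : Rˣ)) : R))
    {p : G × G | TG.comp p.1 p.2}
  cocycle : ∀ a b c, TG.comp a b → TG.comp b c →
    σ a b * σ (TG.mul a b) c = σ a (TG.mul b c) * σ b c
  norm_left : ∀ γ : G, σ (TG.r γ) γ = 1
  norm_right : ∀ γ : G, σ γ (TG.s γ) = 1

/-- `σ` and `τ` are cohomologous via the continuous function `b : G → Tsub`. -/
def CohomologousVia (TG : GroupoidStruct G) {Tsub : Subgroup Rˣ}
    (σ τ : G → G → Tsub) (b : G → Tsub) : Prop :=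
  Continuous (fun γ : G => ((b γ : Rˣ) : R)) ∧ (∀ x ∈ TG.unitSpace, b x = 1) ∧
    ∀ α β, TG.comp α β → σ α β * (τ α β)⁻¹ = b α * b β * (b (TG.mul α β))⁻¹

/-- The twisted groupoid `G ×_σ T`. -/
def prodTwist (TG : GroupoidStruct G) (Tsub : Subgroup Rˣ) (σ : G → G → Tsub) :
    GroupoidStruct (G × Tsub) where
  comp p p' := TG.comp p.1 p'.1
  mul p p' := (TG.mul p.1 p'.1, σ p.1 p'.1 * p.2 * p'.2)
  inv p := (TG.inv p.1, (σ p.1 (TG.inv p.1))⁻¹ * p.2⁻¹)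

/-- The inclusion `i_σ : G⁰ × T → G ×_σ T`. -/
def prodTwistI (Tsub : Subgroup Rˣ) : G → Tsub → G × Tsub := fun x z => (x, z)

/-- The projection `q_σ : G ×_σ T → G`. -/
def prodTwistQ (Tsub : Subgroup Rˣ) : G × Tsub → G := fun p => p.1

/-- An isomorphism of discrete twists: a homeomorphism and groupoid
isomorphism intertwining the inclusions and projections. -/
def IsTwistIso {S1 S2 : Type*} [TopologicalSpace S1] [TopologicalSpace S2]
    (TG : GroupoidStruct G) (T1 : GroupoidStruct S1) (T2 : GroupoidStruct S2)
    {Tsub : Subgroup Rˣ} (i1 : G → Tsub → S1) (q1 : S1 → G)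
    (i2 : G → Tsub → S2) (q2 : S2 → G) (ψ : S1 → S2) : Prop :=
  Function.Bijective ψ ∧ Continuous ψ ∧ (∀ V : Set S1, IsOpen V → IsOpen (ψ '' V)) ∧
    (∀ δ ε, T1.comp δ ε → T2.comp (ψ δ) (ψ ε) ∧ ψ (T1.mul δ ε) = T2.mul (ψ δ) (ψ ε)) ∧
    (∀ x ∈ TG.unitSpace, ∀ z : Tsub, ψ (i1 x z) = i2 x z) ∧
    ∀ ε, q2 (ψ ε) = q1 ε

/-- The carrier of the twisted Steinberg algebra `A_R(G; Σ)`: continuous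
`Tsub`-equivariant functions `f : Σ → R` such that `q(supp f)` has compact
closure. -/
def twistCarrier (TG : GroupoidStruct G) (TS : GroupoidStruct S)
    {Tsub : Subgroup Rˣ} (i : G → Tsub → S) (q : S → G) : Set (S → R) :=
  {f | Continuous f ∧
    (∀ (z : Tsub) (ε : S), f (TS.mul (i (TG.r (q ε)) z) ε) = ((z : Rˣ) : R) * f ε) ∧
    IsCompact (closure (q '' Function.support f))}

/-- The convolution `(f *_Σ g)(ε) = ∑_{γ ∈ G^{s(q(ε))}} f(ε P(γ)) g(P(γ)⁻¹)`. -/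
noncomputable def twistConv (TG : GroupoidStruct G) (TS : GroupoidStruct S)
    (q : S → G) (P : G → S) (f g : S → R) (ε : S) : R :=
  ∑ᶠ (γ : G) (_ : TG.r γ = TG.s (q ε)), f (TS.mul ε (P γ)) * g (TS.inv (P γ))

/-- The involution `f*(ε) = c (f (ε⁻¹))` on `A_R(G; Σ)`. -/
def twistStar (TS : GroupoidStruct S) (c : R → R) (f : S → R) (ε : S) : R :=
  c (f (TS.inv ε))

end Twist
/-- Every discrete twist `(Σ, i, q)` by `Tsub ≤ Rˣ` over a
second-countable ample Hausdorff groupoid `G` is topologically trivial,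
i.e. admits a continuous global section `P : G → Σ`. -/
theorem discreteTwist_topologically_trivial_of_secondCountable_ample
    {G S R : Type*} [TopologicalSpace G] [TopologicalSpace S]
    [T2Space G] [LocallyCompactSpace G] [SecondCountableTopology G]
    [CommRing R] [TopologicalSpace R] [DiscreteTopology R]
    (TG : GroupoidStruct G) (hTG : TG.IsTopGroupoid) (hample : TG.IsAmple)
    (TS : GroupoidStruct S) (Tsub : Subgroup Rˣ)
    (i : G → Tsub → S) (q : S → G)
    (hTw : IsDiscreteTwist TG TS Tsub i q) :
    ∃ P : G → S, IsGlobalSection TG TS q P := by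
  classical
  -- r is continuous
  have hrcont : Continuous TG.r := by
    have hmap : Continuous (fun γ : G => (γ, TG.inv γ)) :=
      continuous_id.prodMk hTG.continuous_inv
    have hmem : ∀ γ : G, (γ, TG.inv γ) ∈ {p : G × G | TG.comp p.1 p.2} := by
      intro γ
      simp only [Set.mem_setOf_eq, hTG.comp_iff]
      exact (hTG.r_inv γ).symm
    exact hTG.continuousOn_mul.comp_continuous hmap hmem
  have hclosed : IsClosed TG.unitSpace := isClosed_eq hrcont continuous_id
  have hopen : IsOpen TG.unitSpace := by
    rw [isOpen_iff_forall_mem_open]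
    intro x hx
    obtain ⟨B, hB, hxB, -⟩ :=
      hample.exists_subset_of_mem_open (Set.mem_univ x) isOpen_univ
    obtain ⟨hBc, hBo, U, hBU, hUo, hrinj, hsinj, hopens⟩ := hB
    refine ⟨B ∩ TG.r '' B, ?_, (hBo.inter (hopens B hBU hBo).1), ?_⟩
    · rintro γ ⟨hγB, δ, hδB, rfl⟩
      exact hTG.r_unit δ
    · exact ⟨hxB, x, hxB, hx⟩
  -- local clopen sections covering G
  have hloc : ∀ α : G, ∃ U : Set G, ∃ P : G → S, α ∈ U ∧ IsOpen U ∧ IsClosed U ∧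
      ContinuousOn P U ∧ (∀ β ∈ U, q (P β) = β) ∧
      ∀ β ∈ U, β ∈ TG.unitSpace → P β ∈ TS.unitSpace := by
    intro α
    by_cases hα : α ∈ TG.unitSpace
    · refine ⟨TG.unitSpace, fun x => i x 1, hα, hopen, hclosed, ?_, ?_, ?_⟩
      · have hmap : Set.MapsTo (fun x : G => (x, (1 : Tsub))) TG.unitSpace
            (TG.unitSpace ×ˢ (Set.univ : Set Tsub)) := fun x hx => ⟨hx, Set.mem_univ _⟩
        exact hTw.i_continuousOn.comp
          ((continuous_id.prodMk continuous_const).continuousOn) hmap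
      · intro β hβ; exact hTw.q_i β hβ 1
      · intro β hβ _
        rw [hTw.unit_eq]
        exact ⟨β, hβ, rfl⟩
    · obtain ⟨B, hαB, hBo, hBbi, P, hPc, hPq, -, -, -⟩ := hTw.locally_trivial α
      obtain ⟨W, hW, hαW, hWsub⟩ := hample.exists_subset_of_mem_open
        (show α ∈ B \ TG.unitSpace from ⟨hαB, hα⟩) (hBo.sdiff hclosed)
      obtain ⟨hWc, hWo, -⟩ := hW
      exact ⟨W, P, hαW, hWo, hWc.isClosed, hPc.mono (fun β hβ => (hWsub hβ).1),
        fun β hβ => hPq β (hWsub hβ).1, fun β hβ hβu => absurd hβu (hWsub hβ).2⟩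
  choose U P hmemU hUo hUc hPc hPq hPunit using hloc
  obtain ⟨T, hTcnt, hTcov⟩ := TopologicalSpace.isOpen_iUnion_countable U hUo
  have hcov : ⋃ α ∈ T, U α = Set.univ := by
    rw [hTcov]
    exact Set.eq_univ_of_forall (fun α => Set.mem_iUnion.2 ⟨α, hmemU α⟩)
  rcases isEmpty_or_nonempty G with hG | hG
  · refine ⟨fun γ => isEmptyElim γ, ?_, fun γ => isEmptyElim γ, fun x hx => isEmptyElim x⟩
    refine continuous_def.2 fun s _ => ?_
    rw [Set.eq_empty_of_isEmpty ((fun γ : G => isEmptyElim γ : G → S) ⁻¹' s)]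
    exact isOpen_empty
  · obtain ⟨e, he⟩ := (hTcnt.insert (Classical.arbitrary G)).exists_eq_range
      (Set.insert_nonempty _ _)
    have hcov' : ∀ γ : G, ∃ n, γ ∈ U (e n) := by
      intro γ
      have h1 : γ ∈ ⋃ α ∈ T, U α := hcov ▸ Set.mem_univ γ
      obtain ⟨α, hαT, hγ⟩ := Set.mem_iUnion₂.1 h1
      have h2 : α ∈ Set.range e := he ▸ Set.mem_insert_of_mem _ hαT
      obtain ⟨n, rfl⟩ := h2
      exact ⟨n, hγ⟩
    refine ⟨fun γ => P (e (Nat.find (hcov' γ))) γ, ?_, ?_, ?_⟩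
    · rw [continuous_iff_continuousAt]
      intro γ
      set n := Nat.find (hcov' γ) with hn
      have hγn : γ ∈ U (e n) := Nat.find_spec (hcov' γ)
      set V : Set G := U (e n) ∩ ⋂ k ∈ {k : ℕ | k < n}, (U (e k))ᶜ with hV
      have hVopen : IsOpen V :=
        (hUo (e n)).inter ((Set.finite_lt_nat n).isOpen_biInter
          (fun k _ => (hUc (e k)).isOpen_compl))
      have hγV : γ ∈ V := by
        refine ⟨hγn, Set.mem_biInter fun k hk => ?_⟩
        exact Nat.find_min (hcov' γ) hk
      have hNeq : ∀ β ∈ V, Nat.find (hcov' β) = n := by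
        rintro β ⟨hβn, hβc⟩
        have hle : Nat.find (hcov' β) ≤ n := Nat.find_min' _ hβn
        rcases lt_or_eq_of_le hle with hlt | heq
        · exact absurd (Nat.find_spec (hcov' β))
            (Set.mem_iInter₂.1 hβc _ hlt)
        · exact heq
      have hEq : (fun β => P (e (Nat.find (hcov' β))) β) =ᶠ[nhds γ]
          (fun β => P (e n) β) := by
        filter_upwards [hVopen.mem_nhds hγV] with β hβ
        rw [hNeq β hβ]
      refine ContinuousAt.congr ?_ hEq.symm
      exact (hPc (e n)).continuousAt ((hUo (e n)).mem_nhds hγn)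
    · intro γ
      exact hPq _ _ (Nat.find_spec (hcov' γ))
    · intro x hx
      exact hPunit _ _ (Nat.find_spec (hcov' x)) hx

end TwistedSteinberg
end

section
/- Let G be a Hausdorff étale groupoid and let σ, τ : G^(2) → T ≤ R^× be continuous 2-cocycles. The following are equivalent: (1) the discrete twists G ×_σ T and G ×_τ T are isomorphic; (2) σ is cohomologous to τ; (3) σ is induced by some continuous global section P : G → G ×_τ T. -/
/-!
Common definitions: topological groupoids, bisections, étale/ample groupoids,
continuous `Rˣ`-valued 2-cocycles, and twisted Steinberg algebras.

A groupoid is modelled as a type `G` together with a composability predicate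
`comp`, a (partial, junk-valued off composable pairs) multiplication `mul`,
and an inversion `inv`.  The range and source maps are `r γ = γ γ⁻¹` and
`s γ = γ⁻¹ γ`, and the unit space is the set of fixed points of `r`.
-/

namespace TwistedSteinberg

open GroupoidStruct

/-!
An isomorphism `G ×_σ T → G ×_τ T` that fixes `G⁰ × T` and lies over `G` is determined by the
values `ψ(γ, 1) = (γ, b γ)`, since `(γ, w) = (r γ, w)(γ, 1)`: it is the fibrewise multiplication
`(γ, w) ↦ (γ, b γ * w)`, and such a map is multiplicative exactly when
`b(αβ) σ(α,β) = τ(α,β) b(α) b(β)`. Likewise every section of `G ×_τ T → G` is a graph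
`γ ↦ (γ, b γ)`, and `P(α) P(β) P(αβ)⁻¹ = (r α, τ(α,β) b(α) b(β) b(αβ)⁻¹)`, so `P` induces `σ`
under the same equation. Since `T` carries the discrete topology, continuity of `b` is
continuity of these maps.
-/

theorem GroupoidStruct.IsGroupoid.comp_r_self {G : Type*} {T : GroupoidStruct G}
    (hT : T.IsGroupoid) (γ : G) : T.comp (T.r γ) γ := by
  have hcomp : T.comp γ (T.inv γ) := (hT.comp_iff _ _).2 (hT.r_inv γ).symm
  rw [hT.comp_iff, r, hT.s_mul _ _ hcomp, hT.s_inv, r]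

theorem mul_inv_eq_mul_mul_inv_iff {T : Type*} [CommGroup T] {s t x y c : T} :
    s * t⁻¹ = x * y * c⁻¹ ↔ c * s = t * (x * y) := by
  rw [← div_eq_mul_inv, ← div_eq_mul_inv, div_eq_div_iff_mul_eq_mul, mul_comm s, mul_comm t]

section ProdTwist

variable {G R : Type*} [CommRing R] {Tsub : Subgroup Rˣ}
  (TG : GroupoidStruct G)

theorem prodTwist_r (τ : G → G → Tsub) (p : G × Tsub) :
    (prodTwist TG Tsub τ).r p = (TG.r p.1, 1) := by
  simp only [r, prodTwist, Prod.mk.injEq, true_and]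
  rw [mul_mul_mul_comm, mul_inv_cancel, mul_inv_cancel, one_mul]

theorem prodTwist_mem_unitSpace_iff (τ : G → G → Tsub) (p : G × Tsub) :
    p ∈ (prodTwist TG Tsub τ).unitSpace ↔ p.1 ∈ TG.unitSpace ∧ p.2 = 1 := by
  change (prodTwist TG Tsub τ).r p = p ↔ _
  rw [prodTwist_r, Prod.ext_iff, eq_comm (b := p.2)]
  rfl

theorem prodTwist_mul_mul_inv (τ : G → G → Tsub) (α β : G) (x y z : Tsub) :
    (prodTwist TG Tsub τ).mul ((prodTwist TG Tsub τ).mul (α, x) (β, y))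
        ((prodTwist TG Tsub τ).inv (TG.mul α β, z)) =
      (TG.r (TG.mul α β), τ α β * x * y * z⁻¹) := by
  simp only [prodTwist, r, Prod.mk.injEq, true_and]
  rw [mul_mul_mul_comm, mul_inv_cancel, one_mul]

def twistShift (b : G → Tsub) (p : G × Tsub) : G × Tsub := (p.1, b p.1 * p.2)

theorem twistShift_mul_iff (σ τ : G → G → Tsub) (b : G → Tsub) (p p' : G × Tsub) :
    twistShift b ((prodTwist TG Tsub σ).mul p p') =
        (prodTwist TG Tsub τ).mul (twistShift b p) (twistShift b p') ↔
      σ p.1 p'.1 * (τ p.1 p'.1)⁻¹ = b p.1 * b p'.1 * (b (TG.mul p.1 p'.1))⁻¹ := by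
  simp only [twistShift, prodTwist, Prod.mk.injEq, true_and, mul_inv_eq_mul_mul_inv_iff]
  rw [show b (TG.mul p.1 p'.1) * (σ p.1 p'.1 * p.2 * p'.2) =
      b (TG.mul p.1 p'.1) * σ p.1 p'.1 * (p.2 * p'.2) by ac_rfl,
    show τ p.1 p'.1 * (b p.1 * p.2) * (b p'.1 * p'.2) =
      τ p.1 p'.1 * (b p.1 * b p'.1) * (p.2 * p'.2) by ac_rfl, mul_left_inj]

end ProdTwist

section Topological

variable {G R : Type*} [TopologicalSpace G] [CommRing R] [TopologicalSpace R]
  {Tsub : Subgroup Rˣ} {TG : GroupoidStruct G}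

theorem IsTwistIso.eq_twistShift (hTG : TG.IsGroupoid) {σ τ : G → G → Tsub}
    (hσ : ∀ γ, σ (TG.r γ) γ = 1) (hτ : ∀ γ, τ (TG.r γ) γ = 1) {ψ : G × Tsub → G × Tsub}
    (hψ : IsTwistIso TG (prodTwist TG Tsub σ) (prodTwist TG Tsub τ) (prodTwistI Tsub)
      (prodTwistQ Tsub) (prodTwistI Tsub) (prodTwistQ Tsub) ψ) :
    ψ = twistShift fun γ => (ψ (γ, 1)).2 := by
  obtain ⟨-, -, -, hmul, hi, hq⟩ := hψ
  funext ⟨γ, w⟩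
  have hdecomp : ((γ, w) : G × Tsub) = (prodTwist TG Tsub σ).mul (TG.r γ, w) (γ, 1) := by
    simp [prodTwist, hTG.r_mul_self, hσ]
  have hψγ : ψ (γ, 1) = (γ, (ψ (γ, 1)).2) := Prod.ext (hq _) rfl
  calc ψ (γ, w) = ψ ((prodTwist TG Tsub σ).mul (TG.r γ, w) (γ, 1)) := by rw [← hdecomp]
    _ = (prodTwist TG Tsub τ).mul (TG.r γ, w) (γ, (ψ (γ, 1)).2) := by
      rw [(hmul (TG.r γ, w) (γ, 1) (hTG.comp_r_self γ)).2, ← hψγ]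
      exact congrArg (fun p => (prodTwist TG Tsub τ).mul p _) (hi _ (hTG.r_unit γ) w)
    _ = (γ, (ψ (γ, 1)).2 * w) := by
      simp [prodTwist, hTG.r_mul_self, hτ, mul_comm]

variable [DiscreteTopology R]

theorem continuous_coe_subgroup_units_iff {X : Type*} [TopologicalSpace X] {b : X → Tsub} :
    Continuous (fun x => ((b x : Rˣ) : R)) ↔ Continuous b :=
  ⟨fun h => (IsLocallyConstant.desc b (fun z : Tsub => ((z : Rˣ) : R))
      ((IsLocallyConstant.iff_continuous _).2 h)
      (Units.val_injective.comp Subtype.val_injective)).continuous,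
    fun h => (continuous_of_discreteTopology (f := fun z : Tsub => ((z : Rˣ) : R))).comp h⟩

theorem isTwistIso_twistShift {σ τ : G → G → Tsub} {b : G → Tsub}
    (hb : CohomologousVia (R := R) TG σ τ b) :
    IsTwistIso TG (prodTwist TG Tsub σ) (prodTwist TG Tsub τ) (prodTwistI Tsub)
      (prodTwistQ Tsub) (prodTwistI Tsub) (prodTwistQ Tsub) (twistShift b) := by
  obtain ⟨hcont, hunit, hcoh⟩ := hb
  have hb : Continuous b := continuous_coe_subgroup_units_iff.1 hcont
  let e : G × Tsub ≃ₜ G × Tsub :=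
    { toEquiv := Equiv.prodShear (Equiv.refl G) fun γ => Equiv.mulLeft (b γ)
      continuous_toFun := continuous_fst.prodMk (by fun_prop)
      continuous_invFun :=
        continuous_fst.prodMk (show Continuous fun p : G × Tsub => (b p.1)⁻¹ * p.2 by fun_prop) }
  refine ⟨e.bijective, e.continuous, e.isOpenMap, fun p p' hpp' =>
    ⟨hpp', (twistShift_mul_iff TG σ τ b p p').2 (hcoh _ _ hpp')⟩, fun x hx z => ?_, fun _ => rfl⟩
  change (x, b x * z) = (x, z)
  rw [hunit x hx, one_mul]

theorem cohomologousVia_of_isTwistIso (hTG : TG.IsGroupoid) {σ τ : G → G → Tsub}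
    (hσ : ∀ γ, σ (TG.r γ) γ = 1) (hτ : ∀ γ, τ (TG.r γ) γ = 1) {ψ : G × Tsub → G × Tsub}
    (hψ : IsTwistIso TG (prodTwist TG Tsub σ) (prodTwist TG Tsub τ) (prodTwistI Tsub)
      (prodTwistQ Tsub) (prodTwistI Tsub) (prodTwistQ Tsub) ψ) :
    CohomologousVia (R := R) TG σ τ fun γ => (ψ (γ, 1)).2 := by
  have hshift := hψ.eq_twistShift hTG hσ hτ
  obtain ⟨-, hcont, -, hmul, hi, -⟩ := hψ
  refine ⟨continuous_coe_subgroup_units_iff.2 (hcont.comp (Continuous.prodMk_left 1)).snd,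
    fun x hx => congrArg Prod.snd (hi x hx 1), fun α β hαβ => ?_⟩
  have hmulαβ := (hmul (α, 1) (β, 1) hαβ).2
  rw [hshift] at hmulαβ
  exact (twistShift_mul_iff TG σ τ _ (α, 1) (β, 1)).1 hmulαβ

theorem cohomologousVia_iff_graph (hTG : TG.IsGroupoid) (σ τ : G → G → Tsub) (b : G → Tsub) :
    CohomologousVia (R := R) TG σ τ b ↔
      IsGlobalSection TG (prodTwist TG Tsub τ) (prodTwistQ Tsub) (fun γ => (γ, b γ)) ∧
        InducesCocycle TG (prodTwist TG Tsub τ) (prodTwistI Tsub) (fun γ => (γ, b γ)) σ := by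
  have hunit : (∀ x ∈ TG.unitSpace, b x = 1) ↔
      ∀ x ∈ TG.unitSpace, (x, b x) ∈ (prodTwist TG Tsub τ).unitSpace := by
    simp only [prodTwist_mem_unitSpace_iff]
    exact forall₂_congr fun x hx => (and_iff_right hx).symm
  have hinduced : (∀ α β, TG.comp α β → σ α β * (τ α β)⁻¹ = b α * b β * (b (TG.mul α β))⁻¹) ↔
      InducesCocycle TG (prodTwist TG Tsub τ) (prodTwistI Tsub) (fun γ => (γ, b γ)) σ := by
    refine forall₂_congr fun α β => imp_congr_right fun hαβ => ?_
    rw [prodTwistI, prodTwist_mul_mul_inv, hTG.r_mul _ _ hαβ, Prod.mk.injEq, and_iff_right rfl,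
      mul_inv_eq_mul_mul_inv_iff, mul_inv_eq_iff_eq_mul, mul_comm (b (TG.mul α β)), ← mul_assoc,
      eq_comm]
  rw [CohomologousVia, continuous_coe_subgroup_units_iff, hunit, hinduced, IsGlobalSection,
    continuous_prodMk]
  simp only [continuous_id', true_and, prodTwistQ, implies_true, and_assoc]

end Topological

theorem twist_iso_iff_cohomologous_iff_induced_general
    {G R : Type*} [TopologicalSpace G]
    [CommRing R] [TopologicalSpace R] [DiscreteTopology R]
    (TG : GroupoidStruct G) (hTG : TG.IsTopGroupoid)
    (Tsub : Subgroup Rˣ) (σ τ : G → G → Tsub)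
    (hσ : IsCocycleSub (R := R) TG Tsub σ) (hτ : IsCocycleSub (R := R) TG Tsub τ) :
    -- (1) ↔ (2)
    ((∃ ψ : G × Tsub → G × Tsub,
        IsTwistIso TG (prodTwist TG Tsub σ) (prodTwist TG Tsub τ)
          (prodTwistI Tsub) (prodTwistQ Tsub) (prodTwistI Tsub) (prodTwistQ Tsub) ψ)
      ↔ (∃ b : G → Tsub, CohomologousVia (R := R) TG σ τ b))
    -- (2) ↔ (3)
    ∧ ((∃ b : G → Tsub, CohomologousVia (R := R) TG σ τ b)
      ↔ (∃ P : G → G × Tsub,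
          IsGlobalSection TG (prodTwist TG Tsub τ) (prodTwistQ Tsub) P
            ∧ InducesCocycle TG (prodTwist TG Tsub τ) (prodTwistI Tsub) P σ)) := by
  have hG := hTG.toIsGroupoid
  refine ⟨⟨fun ⟨ψ, hψ⟩ => ⟨_, cohomologousVia_of_isTwistIso hG hσ.norm_left hτ.norm_left hψ⟩,
    fun ⟨b, hb⟩ => ⟨_, isTwistIso_twistShift hb⟩⟩,
    ⟨fun ⟨b, hb⟩ => ⟨_, (cohomologousVia_iff_graph hG σ τ b).1 hb⟩, ?_⟩⟩
  rintro ⟨P, hP, hinduced⟩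
  have hgraph : P = fun γ => (γ, (P γ).2) := funext fun γ => Prod.ext (hP.2.1 γ) rfl
  rw [hgraph] at hP hinduced
  exact ⟨_, (cohomologousVia_iff_graph hG σ τ _).2 ⟨hP, hinduced⟩⟩

/-- For continuous 2-cocycles `σ, τ : G⁽²⁾ → Tsub ≤ Rˣ` on
a Hausdorff étale groupoid `G`, the following are equivalent:
(1) the discrete twists `G ×_σ T` and `G ×_τ T` are isomorphic;
(2) `σ` is cohomologous to `τ`;
(3) `σ` is induced by some continuous global section `P : G → G ×_τ T`. -/
theorem twist_iso_iff_cohomologous_iff_induced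
    {G R : Type*} [TopologicalSpace G] [T2Space G] [LocallyCompactSpace G]
    [CommRing R] [TopologicalSpace R] [DiscreteTopology R]
    (TG : GroupoidStruct G) (hTG : TG.IsTopGroupoid) (hetale : TG.IsEtale)
    (Tsub : Subgroup Rˣ) (σ τ : G → G → Tsub)
    (hσ : IsCocycleSub (R := R) TG Tsub σ) (hτ : IsCocycleSub (R := R) TG Tsub τ) :
    -- (1) ↔ (2)
    ((∃ ψ : G × Tsub → G × Tsub,
        IsTwistIso TG (prodTwist TG Tsub σ) (prodTwist TG Tsub τ)
          (prodTwistI Tsub) (prodTwistQ Tsub) (prodTwistI Tsub) (prodTwistQ Tsub) ψ)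
      ↔ (∃ b : G → Tsub, CohomologousVia (R := R) TG σ τ b))
    -- (2) ↔ (3)
    ∧ ((∃ b : G → Tsub, CohomologousVia (R := R) TG σ τ b)
      ↔ (∃ P : G → G × Tsub,
          IsGlobalSection TG (prodTwist TG Tsub τ) (prodTwistQ Tsub) P
            ∧ InducesCocycle TG (prodTwist TG Tsub τ) (prodTwistI Tsub) P σ)) :=
  twist_iso_iff_cohomologous_iff_induced_general TG hTG Tsub σ τ hσ hτ

end TwistedSteinberg
end

section
/- Let G be a Hausdorff étale groupoid and let τ : G^(2) → T ≤ R^× be a continuous 2-cocycle. Suppose P : G → G ×_τ T is a continuous global section and σ : G^(2) → T is the continuous 2-cocycle induced by P, i.e. i(r(α), σ(α,β)) = P(α)P(β)P(αβ)^{-1} for all composable (α,β). Then σ is cohomologous to τ. -/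
/-!
Common definitions: topological groupoids, bisections, étale/ample groupoids,
continuous `Rˣ`-valued 2-cocycles, and twisted Steinberg algebras.

A groupoid is modelled as a type `G` together with a composability predicate
`comp`, a (partial, junk-valued off composable pairs) multiplication `mul`,
and an inversion `inv`.  The range and source maps are `r γ = γ γ⁻¹` and
`s γ = γ⁻¹ γ`, and the unit space is the set of fixed points of `r`.
-/

namespace TwistedSteinberg

open GroupoidStruct

/-- If `P : G → G ×_τ T` is a continuous global section of
the discrete twist `G ×_τ T` over a Hausdorff étale groupoid `G`, and `σ` is
the continuous 2-cocycle induced by `P`, then `σ` is cohomologous to `τ`. -/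
theorem induced_cocycle_cohomologous
    {G R : Type*} [TopologicalSpace G] [T2Space G] [LocallyCompactSpace G]
    [CommRing R] [TopologicalSpace R] [DiscreteTopology R]
    (TG : GroupoidStruct G) (hTG : TG.IsTopGroupoid) (hetale : TG.IsEtale)
    (Tsub : Subgroup Rˣ) (τ : G → G → Tsub)
    (hτ : IsCocycleSub (R := R) TG Tsub τ)
    (P : G → G × Tsub)
    (hP : IsGlobalSection TG (prodTwist TG Tsub τ) (prodTwistQ Tsub) P)
    (σ : G → G → Tsub) (hσ : IsCocycleSub (R := R) TG Tsub σ)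
    (hind : InducesCocycle TG (prodTwist TG Tsub τ) (prodTwistI Tsub) P σ) :
    ∃ b : G → Tsub, CohomologousVia (R := R) TG σ τ b := by
  obtain ⟨hPc, hq, hunit⟩ := hP
  refine ⟨fun γ => (P γ).2, ?_, ?_, ?_⟩
  · exact (Units.continuous_val.comp continuous_subtype_val).comp
      (continuous_snd.comp hPc)
  · intro x hx
    have h := congrArg Prod.snd (hunit x hx)
    simp only [prodTwist, GroupoidStruct.r] at h
    have : (τ (P x).1 (TG.inv (P x).1) * (P x).2 *
        ((τ (P x).1 (TG.inv (P x).1))⁻¹ * (P x).2⁻¹)) = 1 := by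
      rw [mul_mul_mul_comm, mul_inv_cancel, mul_inv_cancel, one_mul]
    rw [this] at h
    exact h.symm
  · intro α β hc
    have h := congrArg Prod.snd (hind α β hc)
    simp only [prodTwist, prodTwistI] at h
    rw [← h]
    have hq1 : ∀ γ, (P γ).1 = γ := hq
    simp only [hq1]
    generalize τ (TG.mul α β) (TG.inv (TG.mul α β)) = t
    generalize τ α β = u
    generalize (P α).2 = a
    generalize (P β).2 = c
    generalize (P (TG.mul α β)).2 = d
    simp only [mul_assoc, mul_comm, mul_left_comm]
    rw [mul_left_comm c t⁻¹, mul_left_comm a t⁻¹, mul_left_comm u t⁻¹,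
      mul_inv_cancel_left, mul_left_comm c u⁻¹, mul_left_comm a u⁻¹,
      mul_inv_cancel_left]
end TwistedSteinberg
end

section
/- Let G be a Hausdorff étale groupoid and let σ, τ : G^(2) → T ≤ R^× be continuous 2-cocycles. If the discrete twists (G ×_σ T, i_σ, q_σ) and (G ×_τ T, i_τ, q_τ) are isomorphic as twists, then σ is induced by a continuous global section P : G → G ×_τ T. -/
/-!
Common definitions: topological groupoids, bisections, étale/ample groupoids,
continuous `Rˣ`-valued 2-cocycles, and twisted Steinberg algebras.

A groupoid is modelled as a type `G` together with a composability predicate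
`comp`, a (partial, junk-valued off composable pairs) multiplication `mul`,
and an inversion `inv`.  The range and source maps are `r γ = γ γ⁻¹` and
`s γ = γ⁻¹ γ`, and the unit space is the set of fixed points of `r`.
-/

namespace TwistedSteinberg

open GroupoidStruct

/-- If for continuous 2-cocycles `σ, τ : G⁽²⁾ → Tsub ≤ Rˣ`
on a Hausdorff étale groupoid `G` the discrete twists `G ×_σ T` and
`G ×_τ T` are isomorphic, then `σ` is induced by a continuous global section
`P : G → G ×_τ T`. -/
theorem twist_iso_gives_inducing_section
    {G R : Type*} [TopologicalSpace G] [T2Space G] [LocallyCompactSpace G]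
    [CommRing R] [TopologicalSpace R] [DiscreteTopology R]
    (TG : GroupoidStruct G) (hTG : TG.IsTopGroupoid) (hetale : TG.IsEtale)
    (Tsub : Subgroup Rˣ) (σ τ : G → G → Tsub)
    (hσ : IsCocycleSub (R := R) TG Tsub σ) (hτ : IsCocycleSub (R := R) TG Tsub τ)
    (ψ : G × Tsub → G × Tsub)
    (hψ : IsTwistIso TG (prodTwist TG Tsub σ) (prodTwist TG Tsub τ)
      (prodTwistI Tsub) (prodTwistQ Tsub) (prodTwistI Tsub) (prodTwistQ Tsub) ψ) :
    ∃ P : G → G × Tsub,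
      IsGlobalSection TG (prodTwist TG Tsub τ) (prodTwistQ Tsub) P
        ∧ InducesCocycle TG (prodTwist TG Tsub τ) (prodTwistI Tsub) P σ := by
  obtain ⟨hbij, hcont, hopen, hhom, hi, hq⟩ := hψ
  have hG := hTG.toIsGroupoid
  -- units are fixed by `s`
  have hs_unit : ∀ x, TG.r x = x → TG.s x = x := by
    intro x hx
    have hcomp : TG.comp x (TG.inv x) :=
      (hG.comp_iff x (TG.inv x)).mpr (hG.r_inv x).symm
    calc TG.s x = TG.s (TG.r x) := by rw [hx]
      _ = TG.s (TG.inv x) := hG.s_mul _ _ hcomp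
      _ = TG.r x := hG.s_inv x
      _ = x := hx
  set b : G → Tsub := fun γ => (ψ (γ, 1)).2 with hb
  have hP1 : ∀ γ : G, ψ (γ, (1 : Tsub)) = (γ, b γ) := by
    intro γ
    exact Prod.ext (hq (γ, 1)) rfl
  have hψ_eq : ∀ (γ : G) (z : Tsub), ψ (γ, z) = (γ, z * b γ) := by
    intro γ z
    have hu : TG.r (TG.r γ) = TG.r γ := hG.r_unit γ
    have hcomp : (prodTwist TG Tsub σ).comp (TG.r γ, z) (γ, (1 : Tsub)) :=
      (hG.comp_iff _ _).mpr (hs_unit _ hu)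
    have heq := (hhom _ _ hcomp).2
    have hm : (prodTwist TG Tsub σ).mul (TG.r γ, z) (γ, 1) = (γ, z) := by
      show (TG.mul (TG.r γ) γ, σ (TG.r γ) γ * z * 1) = (γ, z)
      rw [hG.r_mul_self, hσ.norm_left]
      simp
    have hi' : ψ (TG.r γ, z) = (TG.r γ, z) := hi _ (hG.r_unit γ) z
    rw [hm, hi', hP1 γ] at heq
    rw [heq]
    show (TG.mul (TG.r γ) γ, τ (TG.r γ) γ * z * b γ) = (γ, z * b γ)
    rw [hG.r_mul_self, hτ.norm_left]
    simp
  have hb_rel : ∀ α β, TG.comp α β →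
      σ α β * b (TG.mul α β) = τ α β * b α * b β := by
    intro α β hαβ
    have hcomp : (prodTwist TG Tsub σ).comp (α, (1 : Tsub)) (β, (1 : Tsub)) := hαβ
    have heq := (hhom _ _ hcomp).2
    have hL : (prodTwist TG Tsub σ).mul (α, 1) (β, 1) = (TG.mul α β, σ α β) := by
      show (TG.mul α β, σ α β * 1 * 1) = _
      simp
    rw [hψ_eq α 1, hψ_eq β 1, hL, hψ_eq] at heq
    have h2 := congrArg Prod.snd heq
    simpa [prodTwist] using h2
  refine ⟨fun γ => ψ (γ, 1), ⟨?_, ?_, ?_⟩, ?_⟩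
  · exact hcont.comp (continuous_id.prodMk continuous_const)
  · intro γ; exact hq (γ, 1)
  · intro x hx
    have hx1 : ψ (x, 1) = (x, 1) := hi x hx 1
    show (prodTwist TG Tsub τ).r (ψ (x, 1)) = ψ (x, 1)
    rw [hx1]
    have hx' : TG.mul x (TG.inv x) = x := hx
    show (TG.mul x (TG.inv x),
        τ x (TG.inv x) * 1 * ((τ x (TG.inv x))⁻¹ * 1⁻¹)) = (x, 1)
    rw [hx']
    simp
  · intro α β hc
    show (prodTwist TG Tsub τ).mul
        ((prodTwist TG Tsub τ).mul (ψ (α, 1)) (ψ (β, 1)))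
        ((prodTwist TG Tsub τ).inv (ψ (TG.mul α β, 1))) = (TG.r α, σ α β)
    rw [hP1, hP1, hP1]
    refine Prod.ext ?_ ?_
    · show TG.mul (TG.mul α β) (TG.inv (TG.mul α β)) = TG.r α
      exact hG.r_mul α β hc
    · show τ (TG.mul α β) (TG.inv (TG.mul α β)) * (τ α β * b α * b β) *
          ((τ (TG.mul α β) (TG.inv (TG.mul α β)))⁻¹ * (b (TG.mul α β))⁻¹) = σ α β
      rw [mul_mul_mul_comm, mul_inv_cancel, one_mul]
      exact (eq_mul_inv_iff_mul_eq.mpr (hb_rel α β hc)).symm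
end TwistedSteinberg
end

section
/- Let G be a Hausdorff étale groupoid and let Σ be a topologically trivial discrete twist by T ≤ R^× over G. If σ, τ : G^(2) → T are continuous 2-cocycles induced by continuous global sections P_σ, P_τ : G → Σ respectively, then σ is cohomologous to τ. -/
/-!
Common definitions: topological groupoids, bisections, étale/ample groupoids,
continuous `Rˣ`-valued 2-cocycles, and twisted Steinberg algebras.

A groupoid is modelled as a type `G` together with a composability predicate
`comp`, a (partial, junk-valued off composable pairs) multiplication `mul`,
and an inversion `inv`.  The range and source maps are `r γ = γ γ⁻¹` and
`s γ = γ⁻¹ γ`, and the unit space is the set of fixed points of `r`.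
-/

namespace TwistedSteinberg

open GroupoidStruct

section AuxProof

variable {G S R : Type*} [TopologicalSpace G] [TopologicalSpace S]
  [CommRing R] [TopologicalSpace R]
variable {TG : GroupoidStruct G} {TS : GroupoidStruct S} {Tsub : Subgroup Rˣ}
  {i : G → Tsub → S} {q : S → G}

open GroupoidStruct

namespace AuxProof

lemma comp_self_inv {T : GroupoidStruct S} (hg : T.IsGroupoid) (a : S) :
    T.comp a (T.inv a) :=
  (hg.comp_iff _ _).2 (hg.r_inv a).symm

lemma comp_inv_self {T : GroupoidStruct S} (hg : T.IsGroupoid) (a : S) :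
    T.comp (T.inv a) a :=
  (hg.comp_iff _ _).2 (hg.s_inv a)

lemma i_one_unit (hTw : IsDiscreteTwist TG TS Tsub i q) {x : G}
    (hx : x ∈ TG.unitSpace) : i x 1 ∈ TS.unitSpace :=
  hTw.unit_eq ▸ ⟨x, hx, rfl⟩

lemma units_eq (hTw : IsDiscreteTwist TG TS Tsub i q) {ε δ : S}
    (hε : ε ∈ TS.unitSpace) (hδ : δ ∈ TS.unitSpace) (h : q ε = q δ) : ε = δ := by
  rw [← hTw.i_q_unit ε hε, ← hTw.i_q_unit δ hδ, h]

lemma q_r (hTw : IsDiscreteTwist TG TS Tsub i q) (ε : S) :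
    q (TS.r ε) = TG.r (q ε) := by
  show q (TS.mul ε (TS.inv ε)) = TG.mul (q ε) (TG.inv (q ε))
  rw [hTw.q_mul _ _ (comp_self_inv hTw.topS.toIsGroupoid ε), hTw.q_inv]

lemma q_s (hTw : IsDiscreteTwist TG TS Tsub i q) (ε : S) :
    q (TS.s ε) = TG.s (q ε) := by
  show q (TS.mul (TS.inv ε) ε) = TG.mul (TG.inv (q ε)) (q ε)
  rw [hTw.q_mul _ _ (comp_inv_self hTw.topS.toIsGroupoid ε), hTw.q_inv]

lemma r_eq_i (hTw : IsDiscreteTwist TG TS Tsub i q) (hG : TG.IsGroupoid) (ε : S) :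
    TS.r ε = i (TG.r (q ε)) 1 := by
  refine units_eq hTw (hTw.topS.toIsGroupoid.r_unit ε)
    (i_one_unit hTw (hG.r_unit (q ε))) ?_
  rw [q_r hTw, hTw.q_i _ (hG.r_unit (q ε))]

lemma s_eq_i (hTw : IsDiscreteTwist TG TS Tsub i q) (hG : TG.IsGroupoid) (ε : S) :
    TS.s ε = i (TG.s (q ε)) 1 := by
  refine units_eq hTw (hTw.topS.toIsGroupoid.s_unit ε)
    (i_one_unit hTw (hG.s_unit (q ε))) ?_
  rw [q_s hTw, hTw.q_i _ (hG.s_unit (q ε))]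

lemma q_act (hTw : IsDiscreteTwist TG TS Tsub i q) (hG : TG.IsGroupoid)
    (z : Tsub) (ε : S) : q (twistAct TG TS i q z ε) = q ε := by
  rw [twistAct, hTw.q_mul _ _ (hTw.central_comp_left ε z),
    hTw.q_i _ (hG.r_unit (q ε))]
  exact hG.r_mul_self (q ε)

lemma act_one (hTw : IsDiscreteTwist TG TS Tsub i q) (hG : TG.IsGroupoid)
    (ε : S) : twistAct TG TS i q 1 ε = ε := by
  rw [twistAct, ← r_eq_i hTw hG]
  exact hTw.topS.toIsGroupoid.r_mul_self ε

lemma act_act (hTw : IsDiscreteTwist TG TS Tsub i q) (hG : TG.IsGroupoid)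
    (z w : Tsub) (ε : S) :
    twistAct TG TS i q z (twistAct TG TS i q w ε)
      = twistAct TG TS i q (z * w) ε := by
  have hTSg := hTw.topS.toIsGroupoid
  have h1 : q (twistAct TG TS i q w ε) = q ε := q_act hTw hG w ε
  show TS.mul (i (TG.r (q (twistAct TG TS i q w ε))) z) (twistAct TG TS i q w ε)
    = twistAct TG TS i q (z * w) ε
  rw [h1, twistAct, twistAct,
    ← hTSg.assoc _ _ _ (hTw.i_comp _ (hG.r_unit (q ε)) z w)
      (hTw.central_comp_left ε w),
    hTw.i_mul _ (hG.r_unit (q ε))]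

lemma mul_inv_cancel_r {T : GroupoidStruct S} (hg : T.IsGroupoid) {a ε : S}
    (h : T.comp a ε) : T.mul (T.mul a ε) (T.inv ε) = a := by
  rw [hg.assoc a ε (T.inv ε) h (comp_self_inv hg ε)]
  show T.mul a (T.r ε) = a
  rw [← (hg.comp_iff a ε).1 h]
  exact hg.mul_s_self a

lemma cancel_inv_mul {T : GroupoidStruct S} (hg : T.IsGroupoid) {a d : S}
    (h : T.s a = T.s d) : T.mul (T.mul a (T.inv d)) d = a := by
  have hc : T.comp a (T.inv d) := (hg.comp_iff _ _).2 (by rw [hg.r_inv d, h])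
  rw [hg.assoc a (T.inv d) d hc (comp_inv_self hg d)]
  show T.mul a (T.s d) = a
  rw [← h]
  exact hg.mul_s_self a

lemma act_injective (hTw : IsDiscreteTwist TG TS Tsub i q) (hG : TG.IsGroupoid)
    {z w : Tsub} {ε : S}
    (h : twistAct TG TS i q z ε = twistAct TG TS i q w ε) : z = w := by
  have hTSg := hTw.topS.toIsGroupoid
  have h2 : i (TG.r (q ε)) z = i (TG.r (q ε)) w := by
    have hz := mul_inv_cancel_r hTSg (hTw.central_comp_left ε z)
    have hw := mul_inv_cancel_r hTSg (hTw.central_comp_left ε w)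
    rw [← hz, ← hw]
    show TS.mul (twistAct TG TS i q z ε) (TS.inv ε)
      = TS.mul (twistAct TG TS i q w ε) (TS.inv ε)
    rw [h]
  exact (hTw.i_injective _ (hG.r_unit (q ε)) _ (hG.r_unit (q ε)) z w h2).2

lemma mul_act (hTw : IsDiscreteTwist TG TS Tsub i q) (hG : TG.IsGroupoid)
    (z : Tsub) {ε δ : S} (h : TS.comp ε δ) :
    TS.mul (twistAct TG TS i q z ε) δ = twistAct TG TS i q z (TS.mul ε δ) := by
  have hTSg := hTw.topS.toIsGroupoid
  rw [twistAct, twistAct, hTSg.assoc _ _ _ (hTw.central_comp_left ε z) h,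
    hTw.q_mul _ _ h, hG.r_mul _ _ (hTw.q_comp _ _ h)]

lemma act_mul (hTw : IsDiscreteTwist TG TS Tsub i q) (hG : TG.IsGroupoid)
    (z : Tsub) {ε δ : S} (h : TS.comp ε δ) :
    TS.mul ε (twistAct TG TS i q z δ) = twistAct TG TS i q z (TS.mul ε δ) := by
  have hTSg := hTw.topS.toIsGroupoid
  rw [twistAct, twistAct, hTw.central δ z,
    ← hTSg.assoc _ _ _ h (hTw.central_comp_right δ z), hTw.central (TS.mul ε δ) z,
    hTw.q_mul _ _ h, hG.s_mul _ _ (hTw.q_comp _ _ h)]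

lemma s_act (hTw : IsDiscreteTwist TG TS Tsub i q) (z : Tsub) (ε : S) :
    TS.s (twistAct TG TS i q z ε) = TS.s ε :=
  hTw.topS.toIsGroupoid.s_mul _ _ (hTw.central_comp_left ε z)

lemma comp_sections (hTw : IsDiscreteTwist TG TS Tsub i q) (hG : TG.IsGroupoid)
    {P P' : G → S} (hP : IsGlobalSection TG TS q P)
    (hP' : IsGlobalSection TG TS q P') {α β : G} (h : TG.comp α β) :
    TS.comp (P α) (P' β) := by
  refine (hTw.topS.toIsGroupoid.comp_iff _ _).2 ?_
  rw [s_eq_i hTw hG, r_eq_i hTw hG, hP.2.1, hP'.2.1, (hG.comp_iff α β).1 h]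

lemma section_mul (hTw : IsDiscreteTwist TG TS Tsub i q) (hG : TG.IsGroupoid)
    {P : G → S} {σ : G → G → Tsub} (hP : IsGlobalSection TG TS q P)
    (hind : InducesCocycle TG TS i P σ) {α β : G} (h : TG.comp α β) :
    TS.mul (P α) (P β) = twistAct TG TS i q (σ α β) (P (TG.mul α β)) := by
  have hTSg := hTw.topS.toIsGroupoid
  have hX : TS.s (TS.mul (P α) (P β)) = TS.s (P (TG.mul α β)) := by
    rw [hTSg.s_mul _ _ (comp_sections hTw hG hP hP h), s_eq_i hTw hG,
      s_eq_i hTw hG, hP.2.1, hP.2.1, hG.s_mul α β h]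
  calc TS.mul (P α) (P β)
      = TS.mul (TS.mul (TS.mul (P α) (P β)) (TS.inv (P (TG.mul α β))))
        (P (TG.mul α β)) := (cancel_inv_mul hTSg hX).symm
    _ = TS.mul (i (TG.r α) (σ α β)) (P (TG.mul α β)) := by rw [hind α β h]
    _ = twistAct TG TS i q (σ α β) (P (TG.mul α β)) := by
        rw [twistAct, hP.2.1, hG.r_mul α β h]

end AuxProof

end AuxProof

/-- If `σ` and `τ` are continuous 2-cocycles induced by
continuous global sections `Pσ, Pτ` of the same topologically trivial
discrete twist `(Σ, i, q)` by `Tsub ≤ Rˣ` over a Hausdorff étale groupoid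
`G`, then `σ` is cohomologous to `τ`. -/
theorem cocycles_induced_by_sections_cohomologous
    {G S R : Type*} [TopologicalSpace G] [TopologicalSpace S]
    [T2Space G] [LocallyCompactSpace G]
    [CommRing R] [TopologicalSpace R] [DiscreteTopology R]
    (TG : GroupoidStruct G) (hTG : TG.IsTopGroupoid) (hetale : TG.IsEtale)
    (TS : GroupoidStruct S) (Tsub : Subgroup Rˣ)
    (i : G → Tsub → S) (q : S → G)
    (hTw : IsDiscreteTwist TG TS Tsub i q)
    (Pσ Pτ : G → S)
    (hPσ : IsGlobalSection TG TS q Pσ) (hPτ : IsGlobalSection TG TS q Pτ)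
    (σ τ : G → G → Tsub)
    (hσ : IsCocycleSub (R := R) TG Tsub σ) (hτ : IsCocycleSub (R := R) TG Tsub τ)
    (hindσ : InducesCocycle TG TS i Pσ σ) (hindτ : InducesCocycle TG TS i Pτ τ) :
    ∃ b : G → Tsub, CohomologousVia (R := R) TG σ τ b := by
  classical
  have hG : TG.IsGroupoid := hTG.toIsGroupoid
  have hTSg : TS.IsGroupoid := hTw.topS.toIsGroupoid
  have hdisc : DiscreteTopology Tsub := by
    have : DiscreteTopology Rˣ := by
      infer_instance
    infer_instance
  -- definition of b
  have hb : ∀ γ : G, ∃ z : Tsub,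
      TS.mul (Pσ γ) (TS.inv (Pτ γ)) = i (TG.r γ) z := by
    intro γ
    apply (hTw.exact_fibre (TG.r γ) (hG.r_unit γ) _).1
    have hc : TS.comp (Pσ γ) (TS.inv (Pτ γ)) := by
      refine (hTSg.comp_iff _ _).2 ?_
      rw [hTSg.r_inv, AuxProof.s_eq_i hTw hG, AuxProof.s_eq_i hTw hG,
        hPσ.2.1, hPτ.2.1]
    rw [hTw.q_mul _ _ hc, hTw.q_inv, hPσ.2.1, hPτ.2.1]
    rfl
  choose b hbs using hb
  -- key identity : Pσ γ = b γ • Pτ γ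
  have key : ∀ γ : G, Pσ γ = twistAct TG TS i q (b γ) (Pτ γ) := by
    intro γ
    have hs : TS.s (Pσ γ) = TS.s (Pτ γ) := by
      rw [AuxProof.s_eq_i hTw hG, AuxProof.s_eq_i hTw hG, hPσ.2.1, hPτ.2.1]
    calc Pσ γ = TS.mul (TS.mul (Pσ γ) (TS.inv (Pτ γ))) (Pτ γ) :=
          (AuxProof.cancel_inv_mul hTSg hs).symm
      _ = TS.mul (i (TG.r γ) (b γ)) (Pτ γ) := by rw [hbs γ]
      _ = twistAct TG TS i q (b γ) (Pτ γ) := by rw [twistAct, hPτ.2.1]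
  refine ⟨b, ?_, ?_, ?_⟩
  · -- continuity
    rw [continuous_iff_continuousAt]
    intro γ0
    obtain ⟨B, hγ0B, hBopen, -, P, -, hqP, hBij, -, hφopen⟩ :=
      hTw.locally_trivial γ0
    set φ : G × Tsub → S :=
      fun p : G × Tsub => TS.mul (i (TG.r p.1) p.2) (P p.1) with hφdef
    have hφact : ∀ β ∈ B, ∀ z : Tsub, φ (β, z) = twistAct TG TS i q z (P β) := by
      intro β hβ z
      rw [twistAct, hqP β hβ]
    have hqφ : ∀ β ∈ B, ∀ z : Tsub, q (φ (β, z)) = β := by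
      intro β hβ z
      rw [hφact β hβ z, AuxProof.q_act hTw hG, hqP β hβ]
    have hmemσ : Pσ γ0 ∈ q ⁻¹' B := by
      simp only [Set.mem_preimage, hPσ.2.1]; exact hγ0B
    have hmemτ : Pτ γ0 ∈ q ⁻¹' B := by
      simp only [Set.mem_preimage, hPτ.2.1]; exact hγ0B
    obtain ⟨p0, hp0mem, hp0⟩ := hBij.surjOn hmemσ
    obtain ⟨p1, hp1mem, hp1⟩ := hBij.surjOn hmemτ
    have hW0 : IsOpen (φ '' (B ×ˢ ({p0.2} : Set Tsub))) :=
      hφopen _ (Set.prod_mono subset_rfl (Set.subset_univ _))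
        (hBopen.prod (isOpen_discrete _))
    have hW1 : IsOpen (φ '' (B ×ˢ ({p1.2} : Set Tsub))) :=
      hφopen _ (Set.prod_mono subset_rfl (Set.subset_univ _))
        (hBopen.prod (isOpen_discrete _))
    set U : Set G := B ∩ Pσ ⁻¹' (φ '' (B ×ˢ ({p0.2} : Set Tsub)))
        ∩ Pτ ⁻¹' (φ '' (B ×ˢ ({p1.2} : Set Tsub))) with hUdef
    have hUopen : IsOpen U :=
      ((hBopen.inter (hW0.preimage hPσ.1)).inter (hW1.preimage hPτ.1))
    have hγ0U : γ0 ∈ U := by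
      refine ⟨⟨hγ0B, ?_⟩, ?_⟩
      · exact ⟨p0, ⟨(Set.mem_prod.1 hp0mem).1, rfl⟩, hp0⟩
      · exact ⟨p1, ⟨(Set.mem_prod.1 hp1mem).1, rfl⟩, hp1⟩
    have hconst : ∀ γ ∈ U, b γ = p0.2 * p1.2⁻¹ := by
      rintro γ ⟨⟨hγB, hγσ⟩, hγτ⟩
      obtain ⟨pσ, hpσmem, hpσ⟩ := hγσ
      obtain ⟨pτ, hpτmem, hpτ⟩ := hγτ
      obtain ⟨hpσB, hpσ2⟩ := Set.mem_prod.1 hpσmem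
      obtain ⟨hpτB, hpτ2⟩ := Set.mem_prod.1 hpτmem
      have hpσ1 : pσ.1 = γ := by
        have := hqφ pσ.1 hpσB pσ.2
        rw [show ((pσ.1, pσ.2) : G × Tsub) = pσ from rfl, hpσ] at this
        rw [hPσ.2.1] at this; exact this.symm
      have hpτ1 : pτ.1 = γ := by
        have := hqφ pτ.1 hpτB pτ.2
        rw [show ((pτ.1, pτ.2) : G × Tsub) = pτ from rfl, hpτ] at this
        rw [hPτ.2.1] at this; exact this.symm
      have hPσγ : Pσ γ = twistAct TG TS i q p0.2 (P γ) := by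
        rw [← hpσ, ← hφact γ hγB]
        congr 1
        rw [← hpσ1, ← hpσ2]
      have hPτγ : Pτ γ = twistAct TG TS i q p1.2 (P γ) := by
        rw [← hpτ, ← hφact γ hγB]
        congr 1
        rw [← hpτ1, ← hpτ2]
      have : twistAct TG TS i q (b γ * p1.2) (P γ)
          = twistAct TG TS i q p0.2 (P γ) := by
        rw [← AuxProof.act_act hTw hG, ← hPτγ, ← key γ, hPσγ]
      have h2 : b γ * p1.2 = p0.2 := AuxProof.act_injective hTw hG this
      exact eq_mul_inv_of_mul_eq h2
    have hev : (fun γ => ((b γ : Rˣ) : R)) =ᶠ[nhds γ0]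
        fun _ => (((p0.2 * p1.2⁻¹ : Tsub) : Rˣ) : R) := by
      filter_upwards [hUopen.mem_nhds hγ0U] with γ hγ
      rw [hconst γ hγ]
    exact ContinuousAt.congr continuousAt_const hev.symm
  · -- b is 1 on units
    intro x hx
    have hrx : TG.r x = x := hx
    have h1 : Pσ x = i x 1 := by
      rw [← hTw.i_q_unit _ (hPσ.2.2 x hx), hPσ.2.1]
    have h2 : Pτ x = i x 1 := by
      rw [← hTw.i_q_unit _ (hPτ.2.2 x hx), hPτ.2.1]
    have h3 : i x (b x) = i x 1 := by
      have h4 := hbs x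
      rw [hrx, h1, h2, hTw.i_inv x hx, hTw.i_mul x hx] at h4
      simpa using h4.symm
    exact (hTw.i_injective x hx x hx _ _ h3).2
  · -- the coboundary identity
    intro α β hc
    have hτc : TS.comp (Pτ α) (Pτ β) := AuxProof.comp_sections hTw hG hPτ hPτ hc
    have hcc : TS.comp (twistAct TG TS i q (b α) (Pτ α)) (Pτ β) := by
      refine (hTSg.comp_iff _ _).2 ?_
      rw [AuxProof.s_act hTw, (hTSg.comp_iff _ _).1 hτc]
    have hchain : twistAct TG TS i q (σ α β * b (TG.mul α β)) (Pτ (TG.mul α β))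
        = twistAct TG TS i q (b β * (b α * τ α β)) (Pτ (TG.mul α β)) := by
      calc twistAct TG TS i q (σ α β * b (TG.mul α β)) (Pτ (TG.mul α β))
          = twistAct TG TS i q (σ α β)
            (twistAct TG TS i q (b (TG.mul α β)) (Pτ (TG.mul α β))) :=
            (AuxProof.act_act hTw hG _ _ _).symm
        _ = twistAct TG TS i q (σ α β) (Pσ (TG.mul α β)) := by
            rw [← key (TG.mul α β)]
        _ = TS.mul (Pσ α) (Pσ β) :=
            (AuxProof.section_mul hTw hG hPσ hindσ hc).symm
        _ = TS.mul (twistAct TG TS i q (b α) (Pτ α))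
              (twistAct TG TS i q (b β) (Pτ β)) := by rw [← key α, ← key β]
        _ = twistAct TG TS i q (b β)
              (TS.mul (twistAct TG TS i q (b α) (Pτ α)) (Pτ β)) :=
            AuxProof.act_mul hTw hG _ hcc
        _ = twistAct TG TS i q (b β)
              (twistAct TG TS i q (b α) (TS.mul (Pτ α) (Pτ β))) := by
            rw [AuxProof.mul_act hTw hG _ hτc]
        _ = twistAct TG TS i q (b β)
              (twistAct TG TS i q (b α)
                (twistAct TG TS i q (τ α β) (Pτ (TG.mul α β)))) := by
            rw [AuxProof.section_mul hTw hG hPτ hindτ hc]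
        _ = twistAct TG TS i q (b β * (b α * τ α β)) (Pτ (TG.mul α β)) := by
            rw [AuxProof.act_act hTw hG, AuxProof.act_act hTw hG, mul_assoc]
    have hkey : σ α β * b (TG.mul α β) = b β * (b α * τ α β) :=
      AuxProof.act_injective hTw hG hchain
    rw [eq_mul_inv_iff_mul_eq]
    calc σ α β * (τ α β)⁻¹ * b (TG.mul α β)
        = σ α β * b (TG.mul α β) * (τ α β)⁻¹ := mul_right_comm _ _ _
      _ = b β * (b α * τ α β) * (τ α β)⁻¹ := by rw [hkey]
      _ = b α * b β := by
          rw [← mul_assoc, mul_inv_cancel_right]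
          exact mul_comm _ _
end TwistedSteinberg
end

section
/- Let G be an ample Hausdorff groupoid and let (Σ, i, q) be a topologically trivial discrete twist by T ≤ R^× over G. Then the convolution (f *_Σ g)(ε) = Σ_{γ ∈ G^{s(q(ε))}} f(εP(γ)) g(P(γ)^{-1}) (for any continuous global section P) is well defined, independent of the choice of P, has finitely many nonzero summands, and makes A_R(G;Σ) an R-algebra. If R has a T-inverse involution r ↦ r̄, then f*(ε) := conj(f(ε^{-1})) defines an involution under which A_R(G;Σ) is a *-algebra over R. -/
/-!
Common definitions: topological groupoids, bisections, étale/ample groupoids,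
continuous `Rˣ`-valued 2-cocycles, and twisted Steinberg algebras.

A groupoid is modelled as a type `G` together with a composability predicate
`comp`, a (partial, junk-valued off composable pairs) multiplication `mul`,
and an inversion `inv`.  The range and source maps are `r γ = γ γ⁻¹` and
`s γ = γ⁻¹ γ`, and the unit space is the set of fixed points of `r`.
-/

namespace TwistedSteinberg

open GroupoidStruct

/-!
For equivariant `f` and `g`, the summand `f (ε η) * g (η⁻¹)` depends only on `q η`: replacing
`η` by `z ⬝ η` scales the two factors by `z` and `z⁻¹`. This makes the convolution independent of
the section, and it lets the associativity and `*`-identities be proved by reindexing sums over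
`r`-fibres through a left translation `γ ↦ q(η) γ`, which changes the chosen lift of each arrow.

Ampleness makes every sum finite, as a compact set is covered by finitely many bisections and
each of them meets an `r`-fibre at most once. In the Hausdorff case the cover can be taken
pairwise disjoint and clopen; on each piece the fibre sum is a single term, evaluated at a
continuous local inverse of `r`, which gives the continuity of `f * g`.
-/

open GroupoidStruct Function

section Finsum

variable {α β M : Type*} [AddCommMonoid M] {s A : Set α} {t B : Set β}

theorem finsum_mem_finsum_mem_eq_inter (F : α → β → M)
    (hF : ∀ a ∈ s, ∀ b ∈ t, F a b ≠ 0 → a ∈ A ∧ b ∈ B) :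
    ∑ᶠ a ∈ s, ∑ᶠ b ∈ t, F a b = ∑ᶠ a ∈ s ∩ A, ∑ᶠ b ∈ t ∩ B, F a b := by
  have hinner : ∀ a ∈ s, ∑ᶠ b ∈ t, F a b = ∑ᶠ b ∈ t ∩ B, F a b := fun a ha =>
    finsum_mem_inter_support_eq' _ _ _ fun b hb => ⟨fun hbt => ⟨hbt, (hF a ha b hbt hb).2⟩, And.left⟩
  rw [finsum_mem_congr rfl hinner]
  refine finsum_mem_inter_support_eq' _ _ _ fun a ha => ⟨fun has => ⟨has, ?_⟩, And.left⟩
  obtain ⟨b, hb, hne⟩ := exists_ne_zero_of_finsum_mem_ne_zero ha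
  exact (hF a has b hb.1 hne).1

theorem finsum_mem_comm_of_subset (hA : A.Finite) (hB : B.Finite) (F : α → β → M)
    (hF : ∀ a ∈ s, ∀ b ∈ t, F a b ≠ 0 → a ∈ A ∧ b ∈ B) :
    ∑ᶠ a ∈ s, ∑ᶠ b ∈ t, F a b = ∑ᶠ b ∈ t, ∑ᶠ a ∈ s, F a b := by
  rw [finsum_mem_finsum_mem_eq_inter F hF, finsum_mem_finsum_mem_eq_inter (fun b a => F a b)
    fun b hb a ha hne => (hF a ha b hb hne).symm,
    finsum_mem_comm _ (hA.subset Set.inter_subset_right) (hB.subset Set.inter_subset_right)]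

end Finsum

namespace GroupoidStruct

theorem mul_inv_eq_r {G : Type*} (T : GroupoidStruct G) (a : G) : T.mul a (T.inv a) = T.r a := rfl

theorem inv_mul_eq_s {G : Type*} (T : GroupoidStruct G) (a : G) : T.mul (T.inv a) a = T.s a := rfl

namespace IsGroupoid

variable {G : Type*} {T : GroupoidStruct G} (hT : T.IsGroupoid) {a b c : G}
include hT

theorem comp_inv_right (a : G) : T.comp a (T.inv a) :=
  (hT.comp_iff _ _).2 (hT.r_inv a).symm

theorem comp_inv_left (a : G) : T.comp (T.inv a) a :=
  (hT.comp_iff _ _).2 (hT.s_inv a)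

theorem inv_mul_cancel_left (hab : T.comp a b) : T.mul (T.inv a) (T.mul a b) = b := by
  rw [← hT.assoc _ _ _ (hT.comp_inv_left a) hab, T.inv_mul_eq_s, (hT.comp_iff a b).1 hab,
    hT.r_mul_self]

theorem mul_inv_cancel_left (hac : T.r a = T.r c) : T.mul a (T.mul (T.inv a) c) = c := by
  have hc : T.comp (T.inv a) c := (hT.comp_iff _ _).2 (by rw [hT.s_inv, hac])
  rw [← hT.assoc _ _ _ (hT.comp_inv_right a) hc, T.mul_inv_eq_r, hac, hT.r_mul_self]

theorem mul_mul_inv_cancel_right (hab : T.comp a b) : T.mul (T.mul a b) (T.inv b) = a := by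
  rw [hT.assoc _ _ _ hab (hT.comp_inv_right b), T.mul_inv_eq_r, ← (hT.comp_iff a b).1 hab,
    hT.mul_s_self]

theorem inv_eq_of_mul_eq_s (hba : T.comp b a) (h : T.mul b a = T.s a) : T.inv a = b :=
  calc T.inv a = T.mul (T.mul b a) (T.inv a) := by rw [h, ← hT.r_inv, hT.r_mul_self]
    _ = T.mul b (T.r a) := hT.assoc _ _ _ hba (hT.comp_inv_right a)
    _ = b := by rw [← (hT.comp_iff b a).1 hba, hT.mul_s_self]

theorem inv_mul (hab : T.comp a b) : T.inv (T.mul a b) = T.mul (T.inv b) (T.inv a) := by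
  have hba : T.comp (T.inv b) (T.inv a) :=
    (hT.comp_iff _ _).2 (by rw [hT.s_inv, hT.r_inv, (hT.comp_iff a b).1 hab])
  refine hT.inv_eq_of_mul_eq_s ((hT.comp_iff _ _).2 ?_) ?_
  · rw [hT.s_mul _ _ hba, hT.s_inv, hT.r_mul _ _ hab]
  · rw [hT.assoc _ _ _ hba ((hT.comp_iff _ _).2 (by rw [hT.s_inv, hT.r_mul _ _ hab])),
      hT.inv_mul_cancel_left hab, hT.s_mul _ _ hab, T.inv_mul_eq_s]

theorem bijOn_mul_left (a : G) : Set.BijOn (T.mul a) (T.r ⁻¹' {T.s a}) (T.r ⁻¹' {T.r a}) := by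
  have hcomp : ∀ {b}, b ∈ T.r ⁻¹' {T.s a} → T.comp a b := fun hb => (hT.comp_iff _ _).2 hb.symm
  refine ⟨fun b hb => hT.r_mul _ _ (hcomp hb), fun b hb b' hb' h => ?_, fun c hc => ?_⟩
  · rw [← hT.inv_mul_cancel_left (hcomp hb), h, hT.inv_mul_cancel_left (hcomp hb')]
  · refine ⟨T.mul (T.inv a) c, ?_, hT.mul_inv_cancel_left hc.symm⟩
    rw [Set.mem_preimage, hT.r_mul _ _ ((hT.comp_iff _ _).2 (by rw [hT.s_inv, hc])), hT.r_inv]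
    rfl

end IsGroupoid

variable {G : Type*} [TopologicalSpace G] {T : GroupoidStruct G}

def IsCompactOpenBisection (T : GroupoidStruct G) (B : Set G) : Prop :=
  IsCompact B ∧ IsOpen B ∧ T.IsBisection B

namespace IsTopGroupoid

variable (hT : T.IsTopGroupoid)
include hT

theorem continuous_r : Continuous T.r :=
  continuousOn_univ.1 <| hT.continuousOn_mul.comp
    (continuous_id.prodMk hT.continuous_inv).continuousOn fun a _ => hT.comp_inv_right a

theorem continuous_s : Continuous T.s :=
  continuousOn_univ.1 <| hT.continuousOn_mul.comp
    (hT.continuous_inv.prodMk continuous_id).continuousOn fun a _ => hT.comp_inv_left a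

theorem isClosed_setOf_comp [T2Space G] : IsClosed {p : G × G | T.comp p.1 p.2} := by
  simp_rw [hT.comp_iff]
  exact isClosed_eq (hT.continuous_s.comp continuous_fst) (hT.continuous_r.comp continuous_snd)

theorem isCompact_setMul [T2Space G] {K L : Set G} (hK : IsCompact K) (hL : IsCompact L) :
    IsCompact (T.setMul K L) := by
  have : T.setMul K L = (fun p : G × G => T.mul p.1 p.2) '' (K ×ˢ L ∩ {p | T.comp p.1 p.2}) := by
    ext x
    simp [setMul, and_assoc]
  rw [this]
  exact ((hK.prod hL).inter_right hT.isClosed_setOf_comp).image_of_continuousOn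
    (hT.continuousOn_mul.mono Set.inter_subset_right)

end IsTopGroupoid

namespace IsBisection

variable {B B' : Set G}

theorem mono (hB : T.IsBisection B) (h : B' ⊆ B) : T.IsBisection B' := by
  obtain ⟨U, hBU, hU⟩ := hB
  exact ⟨U, h.trans hBU, hU⟩

theorem injOn_r (hB : T.IsBisection B) : Set.InjOn T.r B := by
  obtain ⟨U, hBU, -, hinj, -⟩ := hB
  exact hinj.mono hBU

theorem subsingleton_fibre_inter (hB : T.IsBisection B) (x : G) :
    (T.r ⁻¹' {x} ∩ B).Subsingleton :=
  fun _ ha _ hb => hB.injOn_r ha.2 hb.2 (ha.1.trans hb.1.symm)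

theorem isOpen_image_r (hB : T.IsBisection B) (hBo : IsOpen B) : IsOpen (T.r '' B) := by
  obtain ⟨U, hBU, -, -, -, hopen⟩ := hB
  exact (hopen B hBU hBo).1

theorem exists_continuousOn_rInv (hB : T.IsBisection B) (hBo : IsOpen B) (hr : Continuous T.r) :
    ∃ c : G → G, ContinuousOn c (T.r '' B) ∧ ∀ x ∈ T.r '' B, T.r ⁻¹' {x} ∩ B = {c x} := by
  rcases isEmpty_or_nonempty G with _ | _
  · exact ⟨id, continuousOn_id, fun x => isEmptyElim x⟩
  obtain ⟨U, hBU, -, hinj, -, hopen⟩ := hB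
  have hinjB : Set.InjOn T.r B := hinj.mono hBU
  have ho : IsOpenMap (B.domRestrict T.r) := fun V hV => by
    rw [show B.domRestrict T.r = T.r ∘ Subtype.val from rfl, Set.image_comp]
    exact (hopen _ ((Subtype.coe_image_subset B V).trans hBU) (hBo.isOpenMap_subtype_val V hV)).1
  let e := OpenPartialHomeomorph.ofContinuousOpenRestrict (hinjB.toPartialEquiv T.r B)
    hr.continuousOn ho hBo
  refine ⟨e.symm, e.continuousOn_symm, fun x hx => ?_⟩
  have hcB : e.symm x ∈ B := e.map_target hx
  have hrc : T.r (e.symm x) = x := e.right_inv hx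
  ext γ
  refine ⟨fun hγ => hinjB hγ.2 hcB (hγ.1.trans hrc.symm), ?_⟩
  rintro rfl
  exact ⟨hrc, hcB⟩

end IsBisection

namespace IsAmple

variable (hA : T.IsAmple) {K : Set G}
include hA

theorem exists_cover (hK : IsCompact K) :
    ∃ (n : ℕ) (B : Fin n → Set G), (∀ j, T.IsCompactOpenBisection (B j)) ∧ K ⊆ ⋃ j, B j := by
  have hnhds : ∀ γ : G, ∃ B, T.IsCompactOpenBisection B ∧ γ ∈ B := fun γ => by
    obtain ⟨B, hB, hγB, -⟩ := hA.exists_subset_of_mem_open (Set.mem_univ γ) isOpen_univ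
    exact ⟨B, hB, hγB⟩
  choose B hB hγB using hnhds
  obtain ⟨t, -, hKt⟩ := hK.elim_nhds_subcover B fun γ _ => (hB γ).2.1.mem_nhds (hγB γ)
  refine ⟨t.card, fun j => B (t.equivFin.symm j), fun j => hB _, fun γ hγ => ?_⟩
  obtain ⟨δ, hδt, hγδ⟩ := Set.mem_iUnion₂.1 (hKt hγ)
  exact Set.mem_iUnion.2 ⟨t.equivFin ⟨δ, hδt⟩, by simpa using hγδ⟩

theorem exists_pairwise_disjoint_cover [T2Space G] (hK : IsCompact K) :
    ∃ (n : ℕ) (B : Fin n → Set G), (∀ j, T.IsCompactOpenBisection (B j)) ∧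
      Pairwise (Disjoint on B) ∧ K ⊆ ⋃ j, B j := by
  obtain ⟨n, B, hB, hKB⟩ := hA.exists_cover hK
  refine ⟨n, disjointed B, fun j => disjointedRec ?_ (hB j), disjoint_disjointed B,
    iUnion_disjointed (f := B) ▸ hKB⟩
  rintro D j ⟨hDc, hDo, hDb⟩
  exact ⟨hDc.diff (hB j).2.1, hDo.sdiff (hB j).1.isClosed, hDb.mono Set.sdiff_subset⟩

theorem finite_fibre_inter (hK : IsCompact K) (x : G) : (T.r ⁻¹' {x} ∩ K).Finite := by
  obtain ⟨n, B, hB, hKB⟩ := hA.exists_cover hK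
  refine (Set.finite_iUnion fun j => ((hB j).2.2.subsingleton_fibre_inter x).finite).subset ?_
  rintro γ ⟨hγx, hγK⟩
  obtain ⟨j, hj⟩ := Set.mem_iUnion.1 (hKB hγK)
  exact Set.mem_iUnion.2 ⟨j, hγx, hj⟩

end IsAmple

theorem IsCompactOpenBisection.continuous_finsum_fibre_inter [T2Space G]
    (hT : T.IsTopGroupoid) {B : Set G} (hB : T.IsCompactOpenBisection B)
    {Y M : Type*} [TopologicalSpace Y] [TopologicalSpace M] [AddCommMonoid M]
    {u : Y → G} (hu : Continuous u) {Φ : Y → G → M}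
    (hΦ : ContinuousOn (fun p : Y × G => Φ p.1 p.2) {p | T.r p.2 = u p.1}) :
    Continuous fun y => ∑ᶠ γ ∈ T.r ⁻¹' {u y} ∩ B, Φ y γ := by
  classical
  obtain ⟨hBc, hBo, hBb⟩ := hB
  obtain ⟨c, hc, hcB⟩ := hBb.exists_continuousOn_rInv hBo hT.continuous_r
  have hrc : ∀ x ∈ T.r '' B, T.r (c x) = x := fun x hx =>
    ((hcB x hx).symm.subset (Set.mem_singleton _)).1
  have hV : IsClopen {y | u y ∈ T.r '' B} :=
    (IsClopen.preimage ⟨(hBc.image hT.continuous_r).isClosed, hBb.isOpen_image_r hBo⟩ hu)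
  have hsum : ∀ y, ∑ᶠ γ ∈ T.r ⁻¹' {u y} ∩ B, Φ y γ =
      if u y ∈ T.r '' B then Φ y (c (u y)) else 0 := fun y => by
    split_ifs with h
    · rw [hcB _ h, finsum_mem_singleton]
    · rw [show T.r ⁻¹' {u y} ∩ B = ∅ from Set.eq_empty_of_forall_notMem
        fun γ hγ => h ⟨γ, hγ.2, hγ.1⟩, finsum_mem_empty]
  simp_rw [hsum]
  refine continuous_if (by rw [hV.frontier_eq]; simp) ?_ continuousOn_const
  rw [hV.isClosed.closure_eq]
  exact hΦ.comp (continuousOn_id.prodMk (hc.comp hu.continuousOn fun y hy => hy))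
    fun y hy => hrc _ hy

end GroupoidStruct

section Twist

variable {G S R : Type*} [TopologicalSpace G] [TopologicalSpace S] [CommRing R]
  [TopologicalSpace R] {TG : GroupoidStruct G} {TS : GroupoidStruct S} {Tsub : Subgroup Rˣ}
  {i : G → Tsub → S} {q : S → G}

namespace IsDiscreteTwist

variable (hTw : IsDiscreteTwist TG TS Tsub i q)
include hTw

theorem q_s (ε : S) : q (TS.s ε) = TG.s (q ε) := by
  rw [← TS.inv_mul_eq_s, hTw.q_mul _ _ (hTw.topS.comp_inv_left ε), hTw.q_inv, TG.inv_mul_eq_s]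

theorem q_r (ε : S) : q (TS.r ε) = TG.r (q ε) := by
  rw [← TS.mul_inv_eq_r, hTw.q_mul _ _ (hTw.topS.comp_inv_right ε), hTw.q_inv, TG.mul_inv_eq_r]

theorem s_eq (ε : S) : TS.s ε = i (TG.s (q ε)) 1 := by
  rw [← hTw.q_s, hTw.i_q_unit _ (hTw.topS.s_unit ε)]

theorem r_eq (ε : S) : TS.r ε = i (TG.r (q ε)) 1 := by
  rw [← hTw.q_r, hTw.i_q_unit _ (hTw.topS.r_unit ε)]

variable (hG : TG.IsGroupoid)
include hG

theorem comp_iff (ε δ : S) : TS.comp ε δ ↔ TG.comp (q ε) (q δ) := by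
  refine ⟨hTw.q_comp ε δ, fun h => (hTw.topS.comp_iff _ _).2 ?_⟩
  rw [hTw.s_eq, hTw.r_eq, (hG.comp_iff _ _).1 h]

theorem comp_iff_r_eq_s (ε δ : S) : TS.comp ε δ ↔ TG.r (q δ) = TG.s (q ε) := by
  rw [hTw.comp_iff hG, hG.comp_iff, eq_comm]

theorem q_twistAct (z : Tsub) (ε : S) : q (twistAct TG TS i q z ε) = q ε := by
  rw [twistAct, hTw.q_mul _ _ (hTw.central_comp_left ε z), hTw.q_i _ (hG.r_unit _),
    hG.r_mul_self]

theorem twistAct_mul {ε δ : S} (hc : TS.comp ε δ) (z : Tsub) :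
    TS.mul (twistAct TG TS i q z ε) δ = twistAct TG TS i q z (TS.mul ε δ) := by
  rw [twistAct, twistAct, hTw.topS.assoc _ _ _ (hTw.central_comp_left ε z) hc,
    hTw.q_mul _ _ hc, hG.r_mul _ _ (hTw.q_comp _ _ hc)]

theorem mul_twistAct {ε δ : S} (hc : TS.comp ε δ) (z : Tsub) :
    TS.mul ε (twistAct TG TS i q z δ) = twistAct TG TS i q z (TS.mul ε δ) := by
  have hs : TG.s (q (TS.mul ε δ)) = TG.s (q δ) := by
    rw [hTw.q_mul _ _ hc, hG.s_mul _ _ (hTw.q_comp _ _ hc)]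
  rw [twistAct, twistAct, hTw.central, hTw.central, hs,
    hTw.topS.assoc _ _ _ hc (hTw.central_comp_right δ z)]

theorem inv_twistAct (z : Tsub) (ε : S) :
    TS.inv (twistAct TG TS i q z ε) = twistAct TG TS i q z⁻¹ (TS.inv ε) := by
  rw [twistAct, twistAct, hTw.topS.inv_mul (hTw.central_comp_left ε z),
    hTw.i_inv _ (hG.r_unit _), hTw.central, hTw.q_inv, hG.s_inv]

theorem exists_eq_twistAct {ε δ : S} (hq : q ε = q δ) : ∃ z : Tsub, ε = twistAct TG TS i q z δ := by
  have hc : TS.comp ε (TS.inv δ) := (hTw.comp_iff hG _ _).2 <| by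
    rw [hTw.q_inv, hq]
    exact hG.comp_inv_right _
  have hq' : q (TS.mul ε (TS.inv δ)) = TG.r (q δ) := by
    rw [hTw.q_mul _ _ hc, hTw.q_inv, hq, TG.mul_inv_eq_r]
  obtain ⟨z, hz⟩ := (hTw.exact_fibre _ (hG.r_unit _) _).1 hq'
  refine ⟨z, ?_⟩
  have hs : TS.s δ = TS.s ε := by rw [hTw.s_eq, hTw.s_eq, hq]
  rw [twistAct, ← hz, hTw.topS.assoc _ _ _ hc (hTw.topS.comp_inv_left δ), TS.inv_mul_eq_s, hs,
    hTw.topS.mul_s_self]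

end IsDiscreteTwist

end Twist

section Convolution

variable {G S R : Type*} [CommRing R] {TG : GroupoidStruct G} {TS : GroupoidStruct S}
  {Tsub : Subgroup Rˣ} {i : G → Tsub → S} {q : S → G} {P : G → S} {f g h : S → R}

def IsEquivariant (TG : GroupoidStruct G) (TS : GroupoidStruct S) (i : G → Tsub → S)
    (q : S → G) (f : S → R) : Prop :=
  ∀ (z : Tsub) (ε : S), f (twistAct TG TS i q z ε) = ((z : Rˣ) : R) * f ε

theorem twistConv_apply (P : G → S) (f g : S → R) (ε : S) :
    twistConv TG TS q P f g ε =
      ∑ᶠ γ ∈ TG.r ⁻¹' {TG.s (q ε)}, f (TS.mul ε (P γ)) * g (TS.inv (P γ)) :=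
  rfl

variable [TopologicalSpace G] [TopologicalSpace S] [TopologicalSpace R]
  (hTw : IsDiscreteTwist TG TS Tsub i q) (hG : TG.IsGroupoid)
include hTw hG

theorem IsEquivariant.mul_apply_inv_eq_of_q_eq (hf : IsEquivariant TG TS i q f)
    (hg : IsEquivariant TG TS i q g) {ε η η' : S} (hc : TS.comp ε η) (hq : q η' = q η) :
    f (TS.mul ε η') * g (TS.inv η') = f (TS.mul ε η) * g (TS.inv η) := by
  obtain ⟨z, rfl⟩ := hTw.exists_eq_twistAct hG hq
  rw [hTw.mul_twistAct hG hc, hTw.inv_twistAct hG, hf, hg, mul_mul_mul_comm]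
  simp

variable (hPq : ∀ γ, q (P γ) = γ)
include hPq

theorem comp_section_of_r_eq {ε : S} {γ : G} (hγ : TG.r γ = TG.s (q ε)) : TS.comp ε (P γ) := by
  rwa [hTw.comp_iff_r_eq_s hG, hPq]

theorem twistConv_eq_of_section {P' : G → S} (hP'q : ∀ γ, q (P' γ) = γ)
    (hf : IsEquivariant TG TS i q f) (hg : IsEquivariant TG TS i q g) :
    twistConv TG TS q P f g = twistConv TG TS q P' f g := by
  funext ε
  refine finsum_mem_congr rfl fun γ hγ => ?_
  exact (hf.mul_apply_inv_eq_of_q_eq hTw hG hg (comp_section_of_r_eq hTw hG hPq hγ)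
    (by rw [hP'q, hPq])).symm

theorem finite_fibre_inter_support_mul (hA : TG.IsAmple)
    (hf : IsCompact (closure (q '' support f))) (ε : S) :
    (TG.r ⁻¹' {TG.s (q ε)} ∩ support fun γ => f (TS.mul ε (P γ))).Finite := by
  refine Set.Finite.of_finite_image ?_ ((hG.bijOn_mul_left (q ε)).injOn.mono Set.inter_subset_left)
  refine (hA.finite_fibre_inter hf (TG.r (q ε))).subset ?_
  rintro _ ⟨γ, ⟨hγ, hfγ⟩, rfl⟩
  refine ⟨(hG.bijOn_mul_left _).mapsTo hγ, subset_closure ⟨_, hfγ, ?_⟩⟩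
  rw [hTw.q_mul _ _ (comp_section_of_r_eq hTw hG hPq hγ), hPq]

theorem finite_fibre_inter_support_summand (hA : TG.IsAmple)
    (hf : IsCompact (closure (q '' support f))) (ε : S) (φ : G → R) :
    (TG.r ⁻¹' {TG.s (q ε)} ∩ support fun γ => f (TS.mul ε (P γ)) * φ γ).Finite :=
  (finite_fibre_inter_support_mul hTw hG hPq hA hf ε).subset
    (Set.inter_subset_inter_right _ (support_mul_subset_left _ _))

theorem twistConv_add_left (hA : TG.IsAmple) (hf : IsCompact (closure (q '' support f)))
    (hg : IsCompact (closure (q '' support g))) :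
    twistConv TG TS q P (f + g) h = twistConv TG TS q P f h + twistConv TG TS q P g h := by
  funext ε
  simp only [twistConv_apply, Pi.add_apply, add_mul]
  exact finsum_mem_add_distrib' (finite_fibre_inter_support_summand hTw hG hPq hA hf ε _)
    (finite_fibre_inter_support_summand hTw hG hPq hA hg ε _)

theorem twistConv_add_right (hA : TG.IsAmple) (hf : IsCompact (closure (q '' support f))) :
    twistConv TG TS q P f (g + h) = twistConv TG TS q P f g + twistConv TG TS q P f h := by
  funext ε
  simp only [twistConv_apply, Pi.add_apply, mul_add]
  exact finsum_mem_add_distrib' (finite_fibre_inter_support_summand hTw hG hPq hA hf ε _)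
    (finite_fibre_inter_support_summand hTw hG hPq hA hf ε _)

theorem mul_twistConv (hA : TG.IsAmple) (hf : IsCompact (closure (q '' support f))) (a : R)
    (ε : S) : a * twistConv TG TS q P f g ε =
      ∑ᶠ γ ∈ TG.r ⁻¹' {TG.s (q ε)}, a * (f (TS.mul ε (P γ)) * g (TS.inv (P γ))) :=
  (AddMonoidHom.mulLeft a).map_finsum_mem' (finite_fibre_inter_support_summand hTw hG hPq hA hf ε _)

theorem twistConv_smul_left (hA : TG.IsAmple) (hf : IsCompact (closure (q '' support f)))
    (a : R) : twistConv TG TS q P (a • f) g = a • twistConv TG TS q P f g := by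
  funext ε
  rw [Pi.smul_apply, smul_eq_mul, mul_twistConv hTw hG hPq hA hf]
  exact finsum_mem_congr rfl fun γ _ => mul_assoc a _ _

theorem twistConv_smul_right (hA : TG.IsAmple) (hf : IsCompact (closure (q '' support f)))
    (a : R) : twistConv TG TS q P f (a • g) = a • twistConv TG TS q P f g := by
  funext ε
  rw [Pi.smul_apply, smul_eq_mul, mul_twistConv hTw hG hPq hA hf]
  exact finsum_mem_congr rfl fun γ _ => mul_left_comm _ a _

theorem isEquivariant_twistConv (hA : TG.IsAmple) (hf : IsEquivariant TG TS i q f)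
    (hfc : IsCompact (closure (q '' support f))) :
    IsEquivariant TG TS i q (twistConv TG TS q P f g) := fun z ε => by
  rw [mul_twistConv hTw hG hPq hA hfc, twistConv_apply, hTw.q_twistAct hG]
  refine finsum_mem_congr rfl fun γ hγ => ?_
  rw [hTw.twistAct_mul hG (comp_section_of_r_eq hTw hG hPq hγ), hf, mul_assoc]

theorem twistConv_mul_apply (hf : IsEquivariant TG TS i q f) (hg : IsEquivariant TG TS i q g)
    {ε η : S} (hc : TS.comp ε η) :
    twistConv TG TS q P f g (TS.mul ε η) =
      ∑ᶠ β ∈ TG.r ⁻¹' {TG.s (q ε)}, f (TS.mul ε (P β)) * g (TS.mul (TS.inv (P β)) η) := by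
  have hS := hTw.topS.toIsGroupoid
  have hcG : TG.comp (q ε) (q η) := hTw.q_comp _ _ hc
  rw [twistConv_apply, hTw.q_mul _ _ hc, hG.s_mul _ _ hcG, (hG.comp_iff _ _).1 hcG]
  refine finsum_mem_eq_of_bijOn _ (hG.bijOn_mul_left (q η)) fun δ hδ => ?_
  -- `η⁻¹ P(q(η) δ)` is another lift of `δ`, and `ε η (η⁻¹ P(q(η) δ)) = ε P(q(η) δ)`
  have hβ : TG.r (TG.mul (q η) δ) = TG.r (q η) := (hG.bijOn_mul_left (q η)).mapsTo hδ
  have hcξ : TS.comp (TS.inv η) (P (TG.mul (q η) δ)) := by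
    rw [hTw.comp_iff_r_eq_s hG, hPq, hTw.q_inv, hG.s_inv, hβ]
  have hqξ : q (TS.mul (TS.inv η) (P (TG.mul (q η) δ))) = q (P δ) := by
    rw [hTw.q_mul _ _ hcξ, hTw.q_inv, hPq, hPq,
      hG.inv_mul_cancel_left ((hG.comp_iff _ _).2 hδ.symm)]
  have hcηξ : TS.comp η (TS.mul (TS.inv η) (P (TG.mul (q η) δ))) := by
    rw [hTw.comp_iff_r_eq_s hG, hqξ, hPq]
    exact hδ
  have hcεηδ : TS.comp (TS.mul ε η) (P δ) := by
    rw [hTw.comp_iff_r_eq_s hG, hPq, hTw.q_mul _ _ hc, hG.s_mul _ _ hcG]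
    exact hδ
  have hr : TS.r η = TS.r (P (TG.mul (q η) δ)) := by rw [hTw.r_eq, hTw.r_eq, hPq, hβ]
  rw [← hf.mul_apply_inv_eq_of_q_eq hTw hG hg hcεηδ hqξ, hS.assoc _ _ _ hc hcηξ,
    hS.mul_inv_cancel_left hr, hS.inv_mul hcξ, hS.inv_inv]

theorem twistConv_assoc (hA : TG.IsAmple) (hf : IsEquivariant TG TS i q f)
    (hg : IsEquivariant TG TS i q g) (hfc : IsCompact (closure (q '' support f)))
    (hgc : IsCompact (closure (q '' support g))) :
    twistConv TG TS q P (twistConv TG TS q P f g) h =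
      twistConv TG TS q P f (twistConv TG TS q P g h) := by
  funext ε
  have hs_inv : ∀ β, TG.s (q (TS.inv (P β))) = TG.r β := fun β => by
    rw [hTw.q_inv, hPq, hG.s_inv]
  have hL : ∀ γ ∈ TG.r ⁻¹' {TG.s (q ε)},
      twistConv TG TS q P f g (TS.mul ε (P γ)) * h (TS.inv (P γ)) =
        ∑ᶠ β ∈ TG.r ⁻¹' {TG.s (q ε)},
          f (TS.mul ε (P β)) * g (TS.mul (TS.inv (P β)) (P γ)) * h (TS.inv (P γ)) :=
    fun γ hγ => by
      rw [twistConv_mul_apply hTw hG hPq hf hg (comp_section_of_r_eq hTw hG hPq hγ)]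
      exact (AddMonoidHom.mulRight _).map_finsum_mem'
        (finite_fibre_inter_support_summand hTw hG hPq hA hfc ε _)
  have hR : ∀ β ∈ TG.r ⁻¹' {TG.s (q ε)},
      f (TS.mul ε (P β)) * twistConv TG TS q P g h (TS.inv (P β)) =
        ∑ᶠ γ ∈ TG.r ⁻¹' {TG.s (q ε)},
          f (TS.mul ε (P β)) * g (TS.mul (TS.inv (P β)) (P γ)) * h (TS.inv (P γ)) :=
    fun β hβ => by
      rw [mul_twistConv hTw hG hPq hA hgc, hs_inv, hβ]
      exact finsum_mem_congr rfl fun γ _ => (mul_assoc _ _ _).symm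
  -- both sides are now the double sum of `f (ε P β) g ((P β)⁻¹ P γ) h ((P γ)⁻¹)`, in opposite orders
  rw [twistConv_apply, twistConv_apply, finsum_mem_congr rfl hL, finsum_mem_congr rfl hR]
  have hB := finite_fibre_inter_support_mul hTw hG hPq hA hfc ε
  refine finsum_mem_comm_of_subset
    (hB.biUnion fun β _ => finite_fibre_inter_support_mul hTw hG hPq hA hgc (TS.inv (P β))) hB
    _ fun γ hγ β hβ hne => ?_
  have hfβ := left_ne_zero_of_mul (left_ne_zero_of_mul hne)
  refine ⟨Set.mem_biUnion ⟨hβ, hfβ⟩ ⟨?_, right_ne_zero_of_mul (left_ne_zero_of_mul hne)⟩,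
    hβ, hfβ⟩
  rw [Set.mem_preimage, Set.mem_singleton_iff, hs_inv, hβ]
  exact hγ

end Convolution

section Involution

variable {G S R : Type*} [CommRing R] {TG : GroupoidStruct G} {TS : GroupoidStruct S}
  {Tsub : Subgroup Rˣ} {i : G → Tsub → S} {q : S → G} {P : G → S} {f g : S → R} {c : R → R}

namespace IsTInverseInvolution

variable (hc : IsTInverseInvolution Tsub c)
include hc

theorem map_zero : c 0 = 0 := by
  simpa using hc.2.1 0 0

theorem apply_coe (z : Tsub) : c ((z : Rˣ) : R) = ((z⁻¹ : Tsub) : Rˣ) := by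
  simpa using hc.2.2.2.2 z z.2

theorem twistStar_twistStar (hS : TS.IsGroupoid) (f : S → R) :
    twistStar TS c (twistStar TS c f) = f :=
  funext fun ε => by simp only [twistStar, hS.inv_inv, hc.2.2.2.1]

theorem twistStar_add (f g : S → R) :
    twistStar TS c (f + g) = twistStar TS c f + twistStar TS c g :=
  funext fun _ => hc.2.1 _ _

theorem twistStar_smul (a : R) (f : S → R) : twistStar TS c (a • f) = c a • twistStar TS c f :=
  funext fun _ => hc.2.2.1 _ _

end IsTInverseInvolution

variable [TopologicalSpace G] [TopologicalSpace S] [TopologicalSpace R]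
  (hTw : IsDiscreteTwist TG TS Tsub i q) (hG : TG.IsGroupoid) (hc : IsTInverseInvolution Tsub c)
include hTw hG hc

theorem isEquivariant_twistStar (hf : IsEquivariant TG TS i q f) :
    IsEquivariant TG TS i q (twistStar TS c f) := fun z ε => by
  simp only [twistStar]
  rw [hTw.inv_twistAct hG, hf, hc.2.2.1, hc.apply_coe, inv_inv]

theorem twistStar_twistConv (hPq : ∀ γ, q (P γ) = γ) (hA : TG.IsAmple)
    (hf : IsEquivariant TG TS i q f) (hg : IsEquivariant TG TS i q g)
    (hfc : IsCompact (closure (q '' support f))) :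
    twistStar TS c (twistConv TG TS q P f g) =
      twistConv TG TS q P (twistStar TS c g) (twistStar TS c f) := by
  have hS := hTw.topS.toIsGroupoid
  funext ε
  change AddMonoidHom.mk' c hc.2.1 (twistConv TG TS q P f g (TS.inv ε)) = _
  rw [twistConv_apply, AddMonoidHom.map_finsum_mem' (AddMonoidHom.mk' c hc.2.1)
    (finite_fibre_inter_support_summand hTw hG hPq hA hfc _ _), twistConv_apply, hTw.q_inv,
    hG.s_inv]
  refine (finsum_mem_eq_of_bijOn _ (hG.bijOn_mul_left (q ε)) fun γ hγ => ?_).symm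
  have hεγ : TS.comp ε (P γ) := comp_section_of_r_eq hTw hG hPq hγ
  have hε'γ : TS.comp (TS.inv ε) (P (TG.mul (q ε) γ)) := by
    rw [hTw.comp_iff_r_eq_s hG, hPq, hTw.q_inv, hG.s_inv]
    exact (hG.bijOn_mul_left (q ε)).mapsTo hγ
  simp only [twistStar]
  rw [← hf.mul_apply_inv_eq_of_q_eq hTw hG hg hε'γ (η' := TS.mul ε (P γ))
      (by rw [hTw.q_mul _ _ hεγ, hPq, hPq]),
    hS.inv_mul_cancel_left hεγ, hS.inv_inv]
  exact (mul_comm _ _).trans (hc.2.2.1 _ _).symm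

end Involution

section Topology

variable {G S R : Type*} [TopologicalSpace G] [TopologicalSpace S] [CommRing R]
  [TopologicalSpace R] {TG : GroupoidStruct G} {TS : GroupoidStruct S} {Tsub : Subgroup Rˣ}
  {i : G → Tsub → S} {q : S → G} {P : G → S} {f g : S → R}
  (hTw : IsDiscreteTwist TG TS Tsub i q) (hTG : TG.IsTopGroupoid)
include hTw hTG

theorem twistStar_mem_twistCarrier [T2Space G] [DiscreteTopology R] {c : R → R}
    (hc : IsTInverseInvolution Tsub c) (hf : f ∈ twistCarrier TG TS i q) :
    twistStar TS c f ∈ twistCarrier TG TS i q := by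
  refine ⟨continuous_of_discreteTopology.comp (hf.1.comp hTw.topS.continuous_inv),
    isEquivariant_twistStar hTw hTG.toIsGroupoid hc hf.2.1,
    (hf.2.2.image hTG.continuous_inv).closure_of_subset ?_⟩
  rintro _ ⟨ε, hε, rfl⟩
  have hne : f (TS.inv ε) ≠ 0 := fun h0 => hε (by rw [twistStar, h0, hc.map_zero])
  exact ⟨q (TS.inv ε), subset_closure ⟨_, hne, rfl⟩, by rw [hTw.q_inv, hTG.inv_inv]⟩

variable (hPq : ∀ γ, q (P γ) = γ)
include hPq

theorem mem_inv_image_closure_of_apply_inv_ne_zero {γ : G} (hγ : g (TS.inv (P γ)) ≠ 0) :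
    γ ∈ TG.inv '' closure (q '' support g) :=
  ⟨TG.inv γ, subset_closure ⟨_, hγ, by rw [hTw.q_inv, hPq]⟩, hTG.inv_inv γ⟩

theorem continuous_twistConv [T2Space G] [ContinuousAdd R] [ContinuousMul R] (hA : TG.IsAmple)
    (hPc : Continuous P) (hf : Continuous f) (hg : Continuous g)
    (hgc : IsCompact (closure (q '' support g))) :
    Continuous (twistConv TG TS q P f g) := by
  obtain ⟨n, B, hB, hdisj, hK⟩ :=
    hA.exists_pairwise_disjoint_cover (hgc.image hTG.continuous_inv)
  have hsplit : ∀ ε, twistConv TG TS q P f g ε = ∑ j, ∑ᶠ γ ∈ TG.r ⁻¹' {TG.s (q ε)} ∩ B j,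
      f (TS.mul ε (P γ)) * g (TS.inv (P γ)) := fun ε => by
    rw [← finsum_eq_sum_of_fintype, ← finsum_mem_iUnion
      (fun j k hjk => (hdisj hjk).mono Set.inter_subset_right Set.inter_subset_right)
      (fun j => ((hB j).2.2.subsingleton_fibre_inter _).finite), ← Set.inter_iUnion,
      twistConv_apply]
    refine finsum_mem_inter_support_eq' _ _ _ fun γ hγ => ⟨fun hγx => ⟨hγx, hK ?_⟩, And.left⟩
    exact mem_inv_image_closure_of_apply_inv_ne_zero hTw hTG hPq (right_ne_zero_of_mul hγ)
  have hsummand : ContinuousOn (fun p : S × G => f (TS.mul p.1 (P p.2)) * g (TS.inv (P p.2)))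
      {p | TG.r p.2 = TG.s (q p.1)} := by
    refine (hf.comp_continuousOn (hTw.topS.continuousOn_mul.comp
      (continuous_fst.prodMk (hPc.comp continuous_snd)).continuousOn fun p hp => ?_)).mul
      (hg.comp (hTw.topS.continuous_inv.comp (hPc.comp continuous_snd))).continuousOn
    exact comp_section_of_r_eq hTw hTG.toIsGroupoid hPq hp
  rw [funext hsplit]
  exact continuous_finsetSum _ fun j _ => (hB j).continuous_finsum_fibre_inter hTG
    (hTG.continuous_s.comp hTw.q_continuous) hsummand

theorem isCompact_closure_image_support_twistConv [T2Space G]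
    (hfc : IsCompact (closure (q '' support f))) (hgc : IsCompact (closure (q '' support g))) :
    IsCompact (closure (q '' support (twistConv TG TS q P f g))) := by
  have hG := hTG.toIsGroupoid
  refine (hTG.isCompact_setMul hfc hgc).closure_of_subset ?_
  rintro _ ⟨ε, hε, rfl⟩
  obtain ⟨γ, hγ, hne⟩ := exists_ne_zero_of_finsum_mem_ne_zero hε
  have hc : TS.comp ε (P γ) := comp_section_of_r_eq hTw hG hPq hγ
  have hcG : TG.comp (q ε) γ := by simpa [hPq] using hTw.q_comp _ _ hc
  refine ⟨q (TS.mul ε (P γ)), subset_closure ⟨_, left_ne_zero_of_mul hne, rfl⟩,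
    q (TS.inv (P γ)), subset_closure ⟨_, right_ne_zero_of_mul hne, rfl⟩, ?_, ?_⟩
  · rw [hTw.q_mul _ _ hc, hTw.q_inv, hPq, hG.comp_iff, hG.s_mul _ _ hcG, hG.r_inv]
  · rw [hTw.q_mul _ _ hc, hTw.q_inv, hPq, hG.mul_mul_inv_cancel_right hcG]

theorem twistConv_mem_twistCarrier [T2Space G] [DiscreteTopology R] (hA : TG.IsAmple)
    (hPc : Continuous P) (hf : f ∈ twistCarrier TG TS i q) (hg : g ∈ twistCarrier TG TS i q) :
    twistConv TG TS q P f g ∈ twistCarrier TG TS i q :=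
  ⟨continuous_twistConv hTw hTG hPq hA hPc hf.1 hg.1 hg.2.2,
    isEquivariant_twistConv hTw hTG.toIsGroupoid hPq hA hf.2.1 hf.2.2,
    isCompact_closure_image_support_twistConv hTw hTG hPq hf.2.2 hg.2.2⟩

end Topology

theorem twistSteinbergAlgebra_isAlgebra_general
    {G S R : Type*} [TopologicalSpace G] [TopologicalSpace S]
    [T2Space G]
    [CommRing R] [TopologicalSpace R] [DiscreteTopology R]
    (TG : GroupoidStruct G) (hTG : TG.IsTopGroupoid) (hample : TG.IsAmple)
    (TS : GroupoidStruct S) (Tsub : Subgroup Rˣ)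
    (i : G → Tsub → S) (q : S → G)
    (hTw : IsDiscreteTwist TG TS Tsub i q)
    (P : G → S) (hP : IsGlobalSection TG TS q P) :
    -- the convolution is independent of the choice of continuous global section
    (∀ P' : G → S, IsGlobalSection TG TS q P' →
      ∀ f g, f ∈ twistCarrier (R := R) TG TS i q →
        g ∈ twistCarrier (R := R) TG TS i q →
        twistConv TG TS q P f g = twistConv TG TS q P' f g)
    -- the defining sum has finitely many nonzero summands
    ∧ (∀ f g, f ∈ twistCarrier (R := R) TG TS i q →
        g ∈ twistCarrier (R := R) TG TS i q → ∀ ε : S,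
        {γ : G | TG.r γ = TG.s (q ε)
          ∧ f (TS.mul ε (P γ)) * g (TS.inv (P γ)) ≠ 0}.Finite)
    -- `A_R(G; Σ)` is closed under the convolution
    ∧ (∀ f g, f ∈ twistCarrier (R := R) TG TS i q →
        g ∈ twistCarrier (R := R) TG TS i q →
        twistConv TG TS q P f g ∈ twistCarrier (R := R) TG TS i q)
    -- the convolution is associative
    ∧ (∀ f g h, f ∈ twistCarrier (R := R) TG TS i q →
        g ∈ twistCarrier (R := R) TG TS i q →
        h ∈ twistCarrier (R := R) TG TS i q →
        twistConv TG TS q P (twistConv TG TS q P f g) h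
          = twistConv TG TS q P f (twistConv TG TS q P g h))
    -- biadditive
    ∧ (∀ f g h, f ∈ twistCarrier (R := R) TG TS i q →
        g ∈ twistCarrier (R := R) TG TS i q →
        h ∈ twistCarrier (R := R) TG TS i q →
        twistConv TG TS q P (f + g) h
            = twistConv TG TS q P f h + twistConv TG TS q P g h
          ∧ twistConv TG TS q P f (g + h)
            = twistConv TG TS q P f g + twistConv TG TS q P f h)
    -- and `R`-bilinear
    ∧ (∀ (a : R) (f g : S → R), f ∈ twistCarrier (R := R) TG TS i q →
        g ∈ twistCarrier (R := R) TG TS i q →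
        twistConv TG TS q P (a • f) g = a • twistConv TG TS q P f g
          ∧ twistConv TG TS q P f (a • g) = a • twistConv TG TS q P f g)
    -- if `R` has a `T`-inverse involution, `A_R(G; Σ)` is a `*`-algebra
    ∧ (∀ c : R → R, IsTInverseInvolution Tsub c →
        (∀ f, f ∈ twistCarrier (R := R) TG TS i q →
            twistStar TS c f ∈ twistCarrier (R := R) TG TS i q)
        ∧ (∀ f g, f ∈ twistCarrier (R := R) TG TS i q →
            g ∈ twistCarrier (R := R) TG TS i q →
            twistStar TS c (twistConv TG TS q P f g)
              = twistConv TG TS q P (twistStar TS c g) (twistStar TS c f))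
        ∧ (∀ f, f ∈ twistCarrier (R := R) TG TS i q →
            twistStar TS c (twistStar TS c f) = f)
        ∧ (∀ f g : S → R,
            twistStar TS c (f + g) = twistStar TS c f + twistStar TS c g)
        ∧ (∀ (a : R) (f : S → R),
            twistStar TS c (a • f) = c a • twistStar TS c f)) := by
  have hG := hTG.toIsGroupoid
  have hPq := hP.2.1
  refine ⟨fun P' hP' f g hf hg => twistConv_eq_of_section hTw hG hPq hP'.2.1 hf.2.1 hg.2.1,
    fun f g hf _ ε => finite_fibre_inter_support_summand hTw hG hPq hample hf.2.2 ε _,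
    fun f g hf hg => twistConv_mem_twistCarrier hTw hTG hPq hample hP.1 hf hg,
    fun f g h hf hg _ => twistConv_assoc hTw hG hPq hample hf.2.1 hg.2.1 hf.2.2 hg.2.2,
    fun f g h hf hg _ => ⟨twistConv_add_left hTw hG hPq hample hf.2.2 hg.2.2,
      twistConv_add_right hTw hG hPq hample hf.2.2⟩,
    fun a f g hf _ => ⟨twistConv_smul_left hTw hG hPq hample hf.2.2 a,
      twistConv_smul_right hTw hG hPq hample hf.2.2 a⟩,
    fun c hc => ⟨fun f hf => twistStar_mem_twistCarrier hTw hTG hc hf,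
      fun f g hf hg => twistStar_twistConv hTw hG hc hPq hample hf.2.1 hg.2.1 hf.2.2,
      fun f _ => hc.twistStar_twistStar hTw.topS.toIsGroupoid f,
      hc.twistStar_add, hc.twistStar_smul⟩⟩

/-- For an ample Hausdorff groupoid `G` and a topologically
trivial discrete twist `(Σ, i, q)` by `Tsub ≤ Rˣ` over `G` (with continuous
global section `P`), the convolution
`(f *_Σ g)(ε) = ∑_{γ ∈ G^{s(q(ε))}} f(ε P(γ)) g(P(γ)⁻¹)` is well defined
(independent of the choice of section, with finitely many nonzero
summands) and makes `A_R(G; Σ)` an `R`-algebra; if `R` has a `T`-inverse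
involution `c`, then `f*(ε) = c (f (ε⁻¹))` makes `A_R(G; Σ)` a `*`-algebra
over `R`. -/
theorem twistSteinbergAlgebra_isAlgebra
    {G S R : Type*} [TopologicalSpace G] [TopologicalSpace S]
    [T2Space G] [LocallyCompactSpace G]
    [CommRing R] [TopologicalSpace R] [DiscreteTopology R]
    (TG : GroupoidStruct G) (hTG : TG.IsTopGroupoid) (hample : TG.IsAmple)
    (TS : GroupoidStruct S) (Tsub : Subgroup Rˣ)
    (i : G → Tsub → S) (q : S → G)
    (hTw : IsDiscreteTwist TG TS Tsub i q)
    (P : G → S) (hP : IsGlobalSection TG TS q P) :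
    -- the convolution is independent of the choice of continuous global section
    (∀ P' : G → S, IsGlobalSection TG TS q P' →
      ∀ f g, f ∈ twistCarrier (R := R) TG TS i q →
        g ∈ twistCarrier (R := R) TG TS i q →
        twistConv TG TS q P f g = twistConv TG TS q P' f g)
    -- the defining sum has finitely many nonzero summands
    ∧ (∀ f g, f ∈ twistCarrier (R := R) TG TS i q →
        g ∈ twistCarrier (R := R) TG TS i q → ∀ ε : S,
        {γ : G | TG.r γ = TG.s (q ε)
          ∧ f (TS.mul ε (P γ)) * g (TS.inv (P γ)) ≠ 0}.Finite)
    -- `A_R(G; Σ)` is closed under the convolution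
    ∧ (∀ f g, f ∈ twistCarrier (R := R) TG TS i q →
        g ∈ twistCarrier (R := R) TG TS i q →
        twistConv TG TS q P f g ∈ twistCarrier (R := R) TG TS i q)
    -- the convolution is associative
    ∧ (∀ f g h, f ∈ twistCarrier (R := R) TG TS i q →
        g ∈ twistCarrier (R := R) TG TS i q →
        h ∈ twistCarrier (R := R) TG TS i q →
        twistConv TG TS q P (twistConv TG TS q P f g) h
          = twistConv TG TS q P f (twistConv TG TS q P g h))
    -- biadditive
    ∧ (∀ f g h, f ∈ twistCarrier (R := R) TG TS i q →
        g ∈ twistCarrier (R := R) TG TS i q →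
        h ∈ twistCarrier (R := R) TG TS i q →
        twistConv TG TS q P (f + g) h
            = twistConv TG TS q P f h + twistConv TG TS q P g h
          ∧ twistConv TG TS q P f (g + h)
            = twistConv TG TS q P f g + twistConv TG TS q P f h)
    -- and `R`-bilinear
    ∧ (∀ (a : R) (f g : S → R), f ∈ twistCarrier (R := R) TG TS i q →
        g ∈ twistCarrier (R := R) TG TS i q →
        twistConv TG TS q P (a • f) g = a • twistConv TG TS q P f g
          ∧ twistConv TG TS q P f (a • g) = a • twistConv TG TS q P f g)
    -- if `R` has a `T`-inverse involution, `A_R(G; Σ)` is a `*`-algebra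
    ∧ (∀ c : R → R, IsTInverseInvolution Tsub c →
        (∀ f, f ∈ twistCarrier (R := R) TG TS i q →
            twistStar TS c f ∈ twistCarrier (R := R) TG TS i q)
        ∧ (∀ f g, f ∈ twistCarrier (R := R) TG TS i q →
            g ∈ twistCarrier (R := R) TG TS i q →
            twistStar TS c (twistConv TG TS q P f g)
              = twistConv TG TS q P (twistStar TS c g) (twistStar TS c f))
        ∧ (∀ f, f ∈ twistCarrier (R := R) TG TS i q →
            twistStar TS c (twistStar TS c f) = f)
        ∧ (∀ f g : S → R,
            twistStar TS c (f + g) = twistStar TS c f + twistStar TS c g)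
        ∧ (∀ (a : R) (f : S → R),
            twistStar TS c (a • f) = c a • twistStar TS c f)) :=
  twistSteinbergAlgebra_isAlgebra_general TG hTG hample TS Tsub i q hTw P hP

end TwistedSteinberg
end
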